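/- arXiv:1012.0689 — 9 statements merged into one kernel-verified Lean document; each statement's English description precedes it below -/
import Mathlib

section
/- Let ε ∈ (0,1) and A ≥ 0, and let (Γ_ℓ) be the recursively defined family of functions below. Then there exist constants C > 0 and d ≥ 1 such that |Γ_ℓ(λ)| ≤ C · ℓ^d / (1 + |λ|) for every positive integer ℓ and every λ ∈ ℂ ∖ Ω_ε. -/
/-!
Writing `L - 2iλ = -2i(λ + iL/2)`, the point `-iL/2` lies deep inside the sector `Ω_ε`, so off
`Ω_ε` one has `|L - 2iλ| ≥ (ε/4)(L + |λ|)`. Since `|ω_{ℓ-j}| ≤ Aℓ`, the recursion then gives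
`(ℓ + |λ|) |Γ_ℓ| ≤ K Σ_{j<ℓ} |Γ_j|` with `K = 4A/ε`, and a strong induction using
`Σ_{j<ℓ} j^n ≤ ℓ^{n+1}/(n+1)` propagates `|Γ_j| ≤ C j^n / (1 + |λ|)` once `C` and `n + 1`
are at least `2K`.
-/

open Finset Complex

def OmegaSet (ε : ℝ) : Set ℂ :=
  {z : ℂ | |z.re| ≤ ε * ‖z‖ ∧ z.im ≤ -(1 - ε) / 2}

theorem le_norm_ofReal_sub_two_I_mul {ε L : ℝ} (hε0 : 0 < ε) (hε1 : ε ≤ 1) (hL : 1 ≤ L)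
    {z : ℂ} (hz : z ∉ OmegaSet ε) : ε / 4 * (L + ‖z‖) ≤ ‖(L : ℂ) - 2 * I * z‖ := by
  set w : ℂ := L - 2 * I * z
  have hre : |L + 2 * z.im| ≤ ‖w‖ := by
    simpa [w] using abs_re_le_norm w
  have him : 2 * |z.re| ≤ ‖w‖ := by
    simpa [w, abs_mul] using abs_im_le_norm w
  have hrw : L - 2 * ‖z‖ ≤ ‖w‖ := by
    have := norm_sub_norm_le (L : ℂ) (2 * I * z)
    rwa [Complex.norm_real, Real.norm_of_nonneg (by linarith), norm_mul, norm_mul,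
      Complex.norm_two, Complex.norm_I, mul_one] at this
  have hr : ‖z‖ ≤ |z.re| + |z.im| := norm_le_abs_re_add_abs_im z
  have hre' := (abs_le.mp hre).2
  simp only [OmegaSet, Set.mem_ofPred_eq, not_and_or, not_le] at hz
  rcases hz with hx | hy
  · -- combine `‖w‖ ≥ L - 2‖z‖` and `‖w‖ ≥ 2|Re z| > 2ε‖z‖` with weights `ε/4` and `1 - ε/4`
    nlinarith [mul_le_mul_of_nonneg_left hrw hε0.le, mul_nonneg hε0.le (norm_nonneg z),
      mul_le_mul_of_nonneg_left (him.trans' (by linarith : 2 * (ε * ‖z‖) ≤ 2 * |z.re|))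
        (by linarith : 0 ≤ 1 - ε / 4)]
  · rcases le_or_gt z.im 0 with hy0 | hy0
    · rw [abs_of_nonpos hy0] at hr
      nlinarith [abs_nonneg z.re]
    · rw [abs_of_pos hy0] at hr
      nlinarith [abs_nonneg z.re]

theorem norm_mul_le_sum_norm_of_recursion {ε A : ℝ} {ω γ : ℕ → ℂ} {ℓ : ℕ} {z : ℂ}
    (hε0 : 0 < ε) (hε1 : ε ≤ 1) (hA : 0 ≤ A) (hω : ∀ j : ℕ, 1 ≤ j → ‖ω j‖ ≤ A * j)
    (hℓ : 1 ≤ ℓ) (hz : z ∉ OmegaSet ε)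
    (hγ : γ ℓ = ((ℓ : ℂ) * ((ℓ : ℂ) - 2 * I * z))⁻¹ * ∑ j ∈ range ℓ, ω (ℓ - j) * γ j) :
    ε / 4 * ((ℓ + ‖z‖) * ‖γ ℓ‖) ≤ A * ∑ j ∈ range ℓ, ‖γ j‖ := by
  have hℓR : (1 : ℝ) ≤ ℓ := by exact_mod_cast hℓ
  have hconv : ‖∑ j ∈ range ℓ, ω (ℓ - j) * γ j‖ ≤ ℓ * (A * ∑ j ∈ range ℓ, ‖γ j‖) := by
    rw [mul_sum, mul_sum]
    refine (norm_sum_le _ _).trans (sum_le_sum fun j hj => ?_)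
    have hjℓ := mem_range.mp hj
    rw [norm_mul, ← mul_assoc, mul_comm (ℓ : ℝ)]
    gcongr
    refine (hω _ (by omega)).trans ?_
    gcongr
    exact_mod_cast Nat.sub_le ℓ j
  have hw : ε / 4 * (ℓ + ‖z‖) ≤ ‖(ℓ : ℂ) - 2 * I * z‖ := by
    exact_mod_cast le_norm_ofReal_sub_two_I_mul hε0 hε1 hℓR hz
  have hγ' : (ℓ : ℝ) * ‖(ℓ : ℂ) - 2 * I * z‖ * ‖γ ℓ‖ = ‖∑ j ∈ range ℓ, ω (ℓ - j) * γ j‖ := by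
    have hw0 : (ℓ : ℂ) - 2 * I * z ≠ 0 := by
      rw [← norm_pos_iff]; exact hw.trans_lt' (by positivity)
    rw [hγ, norm_mul, norm_inv, norm_mul, Complex.norm_natCast, ← mul_assoc,
      mul_inv_cancel₀ (by positivity), one_mul]
  calc ε / 4 * ((ℓ + ‖z‖) * ‖γ ℓ‖)
      ≤ ‖(ℓ : ℂ) - 2 * I * z‖ * ‖γ ℓ‖ := by rw [← mul_assoc]; gcongr
    _ ≤ A * ∑ j ∈ range ℓ, ‖γ j‖ := by
      rw [← mul_le_mul_iff_of_pos_left (by positivity : (0 : ℝ) < ℓ), ← mul_assoc, hγ']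
      exact hconv

theorem sum_range_pow_le (n ℓ : ℕ) :
    ∑ j ∈ range ℓ, (j : ℝ) ^ n ≤ (ℓ : ℝ) ^ (n + 1) / (n + 1) := by
  have h := MonotoneOn.sum_le_integral (x₀ := 0) (a := ℓ) (f := fun x : ℝ => x ^ n)
    (pow_left_monotoneOn.mono fun _ hx => hx.1)
  simpa [integral_pow] using h

theorem le_mul_pow_div_of_add_mul_le_mul_sum {K C r : ℝ} {n : ℕ} {g : ℕ → ℝ}
    (hK : 0 ≤ K) (hr : 0 ≤ r) (hKC : 2 * K ≤ C) (hKn : 2 * K ≤ n + 1) (hg0 : g 0 ≤ 1)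
    (hg : ∀ ℓ : ℕ, 1 ≤ ℓ → (ℓ + r) * g ℓ ≤ K * ∑ j ∈ range ℓ, g j) :
    ∀ ℓ : ℕ, 1 ≤ ℓ → g ℓ ≤ C * (ℓ : ℝ) ^ n / (1 + r) := by
  intro ℓ
  induction ℓ using Nat.strong_induction_on with
  | _ ℓ ih =>
  intro hℓ
  have hℓR : (1 : ℝ) ≤ ℓ := by exact_mod_cast hℓ
  have hC : 0 ≤ C := by linarith
  have hsum : ∑ j ∈ range ℓ, g j ≤ 1 + C / (1 + r) * ((ℓ : ℝ) ^ (n + 1) / (n + 1)) :=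
    calc ∑ j ∈ range ℓ, g j
        ≤ ∑ j ∈ range ℓ, ((if j = 0 then 1 else 0) + C / (1 + r) * (j : ℝ) ^ n) := by
          refine sum_le_sum fun j hj => ?_
          rcases Nat.eq_zero_or_pos j with rfl | hj0
          · have : 0 ≤ C / (1 + r) * ((0 : ℕ) : ℝ) ^ n := by positivity
            simp only [if_true]
            linarith
          · rw [if_neg hj0.ne', zero_add, mul_comm_div, ← mul_div_assoc]
            exact ih j (mem_range.mp hj) hj0
      _ = 1 + C / (1 + r) * ∑ j ∈ range ℓ, (j : ℝ) ^ n := by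
          rw [sum_add_distrib, sum_ite_eq', if_pos (mem_range.mpr hℓ), mul_sum]
      _ ≤ 1 + C / (1 + r) * ((ℓ : ℝ) ^ (n + 1) / (n + 1)) := by
          gcongr
          exact sum_range_pow_le n ℓ
  have hpow : 1 ≤ (ℓ : ℝ) ^ n := one_le_pow₀ hℓR
  refine le_of_mul_le_mul_left ((hg ℓ hℓ).trans ?_) (by linarith : (0 : ℝ) < ℓ + r)
  calc K * ∑ j ∈ range ℓ, g j
      ≤ K * (1 + C / (1 + r) * ((ℓ : ℝ) ^ (n + 1) / (n + 1))) := by gcongr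
    _ ≤ (ℓ + r) * (C * (ℓ : ℝ) ^ n / (1 + r)) := by
      have h1 : K * (1 + r) ≤ C / 2 * ((ℓ : ℝ) ^ n * (ℓ + r)) := by
        gcongr
        · linarith
        · exact (by linarith : 1 + r ≤ ℓ + r).trans (le_mul_of_one_le_left (by positivity) hpow)
      have h2 : K * (C * (ℓ : ℝ) ^ n * ℓ) ≤ (n + 1) / 2 * (C * (ℓ : ℝ) ^ n * (ℓ + r)) := by
        gcongr
        · linarith
        · linarith
      rw [pow_succ]
      field_simp
      nlinarith

/-- Given `ε ∈ (0,1)`, `A ≥ 0`, coefficients `ω` with `|ω_j| ≤ A·j`, and the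
recursively defined functions `Γ_ℓ` (with `Γ_0 = 1` and
`Γ_ℓ(λ) = (ℓ(ℓ - 2iλ))⁻¹ Σ_{j<ℓ} ω_{ℓ-j} Γ_j(λ)` on `ℂ ∖ Ω_ε`), there are
constants `C > 0` and `d ≥ 1` with `|Γ_ℓ(λ)| ≤ C ℓ^d / (1 + |λ|)` for all
`ℓ ≥ 1` and `λ ∈ ℂ ∖ Ω_ε`. -/
theorem stmt1 (ε : ℝ) (hε0 : 0 < ε) (hε1 : ε < 1)
    (A : ℝ) (hA : 0 ≤ A) (ω : ℕ → ℂ)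
    (hω : ∀ j : ℕ, 1 ≤ j → ‖ω j‖ ≤ A * j)
    (Γ : ℕ → ℂ → ℂ)
    (hΓ0 : ∀ z : ℂ, Γ 0 z = 1)
    (hΓ : ∀ ℓ : ℕ, 1 ≤ ℓ → ∀ z : ℂ, z ∉ OmegaSet ε →
      Γ ℓ z = ((ℓ : ℂ) * ((ℓ : ℂ) - 2 * Complex.I * z))⁻¹ *
        ∑ j ∈ Finset.range ℓ, ω (ℓ - j) * Γ j z) :
    ∃ C d : ℝ, 0 < C ∧ 1 ≤ d ∧
      ∀ ℓ : ℕ, 1 ≤ ℓ → ∀ z : ℂ, z ∉ OmegaSet ε →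
        ‖Γ ℓ z‖ ≤ C * (ℓ : ℝ) ^ d / (1 + ‖z‖) := by
  set K : ℝ := A / (ε / 4)
  have hK : 0 ≤ K := by positivity
  set n : ℕ := ⌈2 * K⌉₊ + 1
  have hKn : 2 * K ≤ n + 1 := by
    have := Nat.le_ceil (2 * K)
    push_cast [n]
    linarith
  refine ⟨2 * K + 1, n, by positivity, by simp [n], fun ℓ hℓ z hz => ?_⟩
  rw [Real.rpow_natCast]
  refine le_mul_pow_div_of_add_mul_le_mul_sum (g := fun j => ‖Γ j z‖) hK (norm_nonneg z)
    (by linarith) hKn (by simp [hΓ0]) (fun m hm => ?_) ℓ hℓ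
  change (m + ‖z‖) * ‖Γ m z‖ ≤ A / (ε / 4) * ∑ j ∈ range m, ‖Γ j z‖
  rw [div_mul_eq_mul_div, le_div_iff₀' (by positivity)]
  exact norm_mul_le_sum_norm_of_recursion (γ := (Γ · z)) hε0 hε1.le hA hω hm hz (hΓ m hm z hz)
end

section
/- Let ε ∈ (0,1) and A ≥ 0, and let (Γ_ℓ) be the recursively defined family of functions below. Then each Γ_ℓ is holomorphic on the open set ℂ ∖ Ω_ε, and there exists a constant d > 0 such that for every h ∈ ℕ there is a constant C > 0 with |(d/dλ)^h Γ_ℓ(λ)| ≤ C · ℓ^d · (1 + |λ|)^{−h−1} for every positive integer ℓ and every λ ∈ ℂ ∖ Ω_ε. -/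
open Complex

lemma isOpen_omegaSet_compl (ε : ℝ) : IsOpen (OmegaSet ε)ᶜ :=
  ((isClosed_le (continuous_abs.comp continuous_re) (continuous_const.mul continuous_norm)).inter
    (isClosed_le continuous_im continuous_const)).isOpen_compl

def SeparatedFromPoles (κ : ℝ) (z : ℂ) : Prop :=
  ∀ n : ℕ, 1 ≤ n → κ * (n + ‖z‖) ≤ ‖(n : ℂ) - 2 * I * z‖

lemma separatedFromPoles_of_notMem_omegaSet {ε : ℝ} (hε0 : 0 < ε) (hε1 : ε < 1) {z : ℂ}
    (hz : z ∉ OmegaSet ε) : SeparatedFromPoles (ε / 4) z := by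
  intro n hn
  have hn' : (1 : ℝ) ≤ n := by exact_mod_cast hn
  set w : ℂ := n - 2 * I * z
  have hre : n + 2 * z.im ≤ ‖w‖ := by
    simpa [w] using (le_abs_self w.re).trans (abs_re_le_norm w)
  have him : 2 * |z.re| ≤ ‖w‖ := by
    simpa [w, abs_mul] using abs_im_le_norm w
  have hnorm : 2 * ‖z‖ - n ≤ ‖w‖ := by
    have := norm_sub_norm_le (2 * I * z) (n : ℂ)
    rw [norm_sub_rev] at this
    simpa [w] using this
  have hzim : -‖z‖ ≤ z.im := neg_le_of_abs_le (abs_im_le_norm z)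
  simp only [OmegaSet, Set.mem_ofPred_eq, not_and_or, not_le] at hz
  rcases hz with hz | hz
  · rcases le_or_gt (n : ℝ) (4 * ‖z‖) with hc | hc <;> nlinarith [abs_nonneg z.re]
  · rcases le_or_gt ‖z‖ n with hc | hc <;> nlinarith

lemma SeparatedFromPoles.of_norm_sub_le {κ : ℝ} {z w : ℂ} (hκ : 0 ≤ κ)
    (hz : SeparatedFromPoles κ z) (hw : ‖w - z‖ ≤ κ / 4 * (1 + ‖z‖)) :
    SeparatedFromPoles (κ / 4) w := by
  have hκ2 : κ ≤ 2 := by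
    have h1 := hz 1 le_rfl
    have h2 : ‖(1 : ℂ) - 2 * I * z‖ ≤ 1 + 2 * ‖z‖ := by
      simpa using norm_sub_le (1 : ℂ) (2 * I * z)
    push_cast at h1
    nlinarith [norm_nonneg z]
  intro n hn
  have hn' : (1 : ℝ) ≤ n := by exact_mod_cast hn
  have hsub : ‖(n : ℂ) - 2 * I * z‖ - 2 * ‖w - z‖ ≤ ‖(n : ℂ) - 2 * I * w‖ := by
    have := norm_sub_norm_le ((n : ℂ) - 2 * I * z) ((n : ℂ) - 2 * I * w)
    have e : (n : ℂ) - 2 * I * z - ((n : ℂ) - 2 * I * w) = 2 * I * (w - z) := by ring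
    rw [e] at this
    simp only [norm_mul, norm_I, Complex.norm_ofNat, mul_one] at this
    linarith
  have hwz : ‖w‖ ≤ ‖z‖ + ‖w - z‖ := by
    simpa using norm_add_le z (w - z)
  nlinarith [hz n hn, norm_nonneg z, norm_nonneg (w - z)]

lemma SeparatedFromPoles.sub_ne_zero {κ : ℝ} {z : ℂ} (hκ : 0 < κ) (hz : SeparatedFromPoles κ z)
    {n : ℕ} (hn : 1 ≤ n) : (n : ℂ) - 2 * I * z ≠ 0 := by
  have hn' : (1 : ℝ) ≤ n := by exact_mod_cast hn
  refine norm_pos_iff.mp (lt_of_lt_of_le ?_ (hz n hn))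
  have := norm_nonneg z
  positivity

-- The recursion continued to all of ℂ; at the poles `λ = -in/2` it takes the junk value `0⁻¹ = 0`.
noncomputable def gammaRec (ω : ℕ → ℂ) : ℕ → ℂ → ℂ
  | 0, _ => 1
  | m + 1, z => (((m + 1 : ℕ) : ℂ) * ((m + 1 : ℕ) - 2 * I * z))⁻¹ *
      ∑ j : Fin (m + 1), ω (m + 1 - j) * gammaRec ω j z

variable {ω : ℕ → ℂ}

@[simp] lemma gammaRec_zero (z : ℂ) : gammaRec ω 0 z = 1 := by
  rw [gammaRec]

lemma gammaRec_succ (m : ℕ) (z : ℂ) :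
    gammaRec ω (m + 1) z = (((m + 1 : ℕ) : ℂ) * ((m + 1 : ℕ) - 2 * I * z))⁻¹ *
      ∑ j ∈ Finset.range (m + 1), ω (m + 1 - j) * gammaRec ω j z := by
  rw [gammaRec]
  exact congrArg _ (Fin.sum_univ_eq_sum_range (fun j => ω (m + 1 - j) * gammaRec ω j z) _)

lemma eq_gammaRec_of_recursion {ε : ℝ} {Γ : ℕ → ℂ → ℂ}
    (hΓ0 : ∀ z : ℂ, Γ 0 z = 1)
    (hΓ : ∀ ℓ : ℕ, 1 ≤ ℓ → ∀ z : ℂ, z ∉ OmegaSet ε →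
      Γ ℓ z = ((ℓ : ℂ) * ((ℓ : ℂ) - 2 * I * z))⁻¹ * ∑ j ∈ Finset.range ℓ, ω (ℓ - j) * Γ j z)
    (ℓ : ℕ) {z : ℂ} (hz : z ∉ OmegaSet ε) : Γ ℓ z = gammaRec ω ℓ z := by
  induction ℓ using Nat.strong_induction_on with
  | _ ℓ ih =>
    rcases ℓ with _ | m
    · rw [hΓ0, gammaRec_zero]
    · rw [hΓ (m + 1) m.succ_pos z hz, gammaRec_succ]
      push_cast
      congr 1
      exact Finset.sum_congr rfl fun j hj => by rw [ih j (Finset.mem_range.mp hj)]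

lemma differentiableAt_gammaRec {z : ℂ} (hz : ∀ n : ℕ, 1 ≤ n → (n : ℂ) - 2 * I * z ≠ 0)
    (ℓ : ℕ) : DifferentiableAt ℂ (gammaRec ω ℓ) z := by
  induction ℓ using Nat.strong_induction_on with
  | _ ℓ ih =>
    rcases ℓ with _ | m
    · rw [show gammaRec ω 0 = fun _ => 1 from funext gammaRec_zero]
      exact differentiableAt_const _
    · rw [funext (gammaRec_succ m)]
      refine ((differentiableAt_const _).mul ((differentiableAt_const _).sub
        ((differentiableAt_const _).mul differentiableAt_id))).inv ?_ |>.mul ?_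
      · exact mul_ne_zero (Nat.cast_ne_zero.mpr m.succ_ne_zero) (hz (m + 1) m.succ_pos)
      · exact DifferentiableAt.fun_sum fun j hj =>
          (differentiableAt_const _).mul (ih j (Finset.mem_range.mp hj))

lemma sum_range_pow_le_s2 (B n : ℕ) :
    ((B : ℝ) + 1) * ∑ i ∈ Finset.range n, (i : ℝ) ^ B ≤ (n : ℝ) ^ (B + 1) := by
  have hmono : MonotoneOn (fun x : ℝ => x ^ B) (Set.Icc 0 (0 + n)) :=
    fun x hx y _ hxy => pow_le_pow_left₀ hx.1 hxy B
  have h := hmono.sum_le_integral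
  simp only [zero_add, integral_pow] at h
  rw [zero_pow B.succ_ne_zero, sub_zero, le_div_iff₀ (by positivity)] at h
  linarith

lemma norm_sum_recursion_le {A K : ℝ} {B m : ℕ} {g : ℕ → ℂ} (hA : 0 ≤ A) (hK : 0 ≤ K)
    (hω : ∀ j : ℕ, 1 ≤ j → ‖ω j‖ ≤ A * j) (hg0 : g 0 = 1)
    (hg : ∀ j, 1 ≤ j → j ≤ m → ‖g j‖ ≤ K * j ^ B) :
    ‖∑ j ∈ Finset.range (m + 1), ω (m + 1 - j) * g j‖ ≤
      A * (m + 1) * (1 + K * ((m : ℝ) + 1) ^ (B + 1) / (B + 1)) := by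
  have hωle : ∀ k, 1 ≤ k → k ≤ m + 1 → ‖ω k‖ ≤ A * (m + 1) := fun k hk hkm =>
    (hω k hk).trans (mul_le_mul_of_nonneg_left (by exact_mod_cast hkm) hA)
  have hpow : ∑ i ∈ Finset.range m, ((i : ℝ) + 1) ^ B ≤ ((m : ℝ) + 1) ^ (B + 1) / (B + 1) := by
    rw [le_div_iff₀ (by positivity), mul_comm]
    have h := sum_range_pow_le_s2 B (m + 1)
    rw [Finset.sum_range_succ'] at h
    push_cast at h
    nlinarith [pow_nonneg (le_refl (0 : ℝ)) B]
  calc ‖∑ j ∈ Finset.range (m + 1), ω (m + 1 - j) * g j‖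
      ≤ ∑ j ∈ Finset.range (m + 1), ‖ω (m + 1 - j)‖ * ‖g j‖ := by
        simpa only [norm_mul] using
          norm_sum_le (Finset.range (m + 1)) (fun j => ω (m + 1 - j) * g j)
    _ = ∑ i ∈ Finset.range m, ‖ω (m - i)‖ * ‖g (i + 1)‖ + ‖ω (m + 1)‖ := by
        simp [Finset.sum_range_succ', hg0]
    _ ≤ ∑ i ∈ Finset.range m, A * (m + 1) * (K * ((i : ℝ) + 1) ^ B) + A * (m + 1) := by
        gcongr with i hi
        · exact hωle _ (by have := Finset.mem_range.mp hi; omega) (by omega)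
        · exact_mod_cast hg (i + 1) (by omega) (by have := Finset.mem_range.mp hi; omega)
        · exact hωle _ (by omega) le_rfl
    _ ≤ A * (m + 1) * (1 + K * ((m : ℝ) + 1) ^ (B + 1) / (B + 1)) := by
        rw [← Finset.mul_sum, ← Finset.mul_sum, mul_div_assoc]
        have hAK : 0 ≤ A * (m + 1) * K := mul_nonneg (by positivity) hK
        nlinarith [mul_le_mul_of_nonneg_left hpow hAK]

lemma norm_gammaRec_le {κ A : ℝ} {B : ℕ} (hκ : 0 < κ) (hA : 0 ≤ A)
    (hω : ∀ j : ℕ, 1 ≤ j → ‖ω j‖ ≤ A * j) (hB : 2 * A ≤ κ * (B + 1))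
    {z : ℂ} (hz : SeparatedFromPoles κ z) (ℓ : ℕ) (hℓ : 1 ≤ ℓ) :
    ‖gammaRec ω ℓ z‖ ≤ (B + 1) * ℓ ^ B / (1 + ‖z‖) := by
  induction ℓ using Nat.strong_induction_on with
  | _ ℓ ih =>
    obtain ⟨m, rfl⟩ : ∃ m, ℓ = m + 1 := ⟨ℓ - 1, by omega⟩
    set a := ‖z‖
    set L : ℝ := (m : ℝ) + 1
    have ha : 0 ≤ a := norm_nonneg z
    have hL : 1 ≤ L := by simp [L]
    have hsum := norm_sum_recursion_le (K := (B + 1) / (1 + a)) (m := m)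
      (g := fun j => gammaRec ω j z) hA (by positivity) hω (gammaRec_zero z) fun j hj hjm => by
        rw [div_mul_eq_mul_div]; exact ih j (by omega) hj
    have hden : κ * (L + a) ≤ ‖(m + 1 : ℂ) - 2 * I * z‖ := by
      simpa [L] using hz (m + 1) (by omega)
    rw [gammaRec_succ, norm_mul, norm_inv, norm_mul, Complex.norm_natCast, ← div_eq_inv_mul]
    push_cast
    calc _ ≤ A * L * (1 + (B + 1) / (1 + a) * L ^ (B + 1) / (B + 1)) / (L * (κ * (L + a))) := by
          gcongr
      _ ≤ (B + 1) * L ^ B / (1 + a) := by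
          rw [div_le_div_iff₀ (by positivity) (by positivity)]
          have hLpow : L ≤ L ^ (B + 1) := le_self_pow₀ hL B.succ_ne_zero
          calc A * L * (1 + (B + 1) / (1 + a) * L ^ (B + 1) / (B + 1)) * (1 + a)
              = A * (L * (1 + a) + L ^ (B + 1) * L) := by
                field_simp
            _ ≤ κ * (B + 1) / 2 * (2 * L ^ (B + 1) * (L + a)) := by
                gcongr
                · linarith
                · nlinarith
            _ = (B + 1) * L ^ B * (L * (κ * (L + a))) := by ring

lemma norm_iteratedDeriv_gammaRec_le {ε A : ℝ} {B : ℕ} (hε0 : 0 < ε) (hε1 : ε < 1)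
    (hA : 0 ≤ A) (hω : ∀ j : ℕ, 1 ≤ j → ‖ω j‖ ≤ A * j)
    (hB : 32 * A ≤ ε * (B + 1))
    (h ℓ : ℕ) (hℓ : 1 ≤ ℓ) {z : ℂ} (hz : z ∉ OmegaSet ε) :
    ‖iteratedDeriv h (gammaRec ω ℓ) z‖ ≤
      h.factorial * (2 * (B + 1)) * (16 / ε) ^ h * ℓ ^ B / (1 + ‖z‖) ^ (h + 1) := by
  set r := ε / 16 * (1 + ‖z‖)
  have hr : 0 < r := by positivity
  have hsep : ∀ w ∈ Metric.closedBall z r, SeparatedFromPoles (ε / 16) w := fun w hw => by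
    have hwz : ‖w - z‖ ≤ ε / 4 / 4 * (1 + ‖z‖) := by
      rw [← dist_eq_norm, div_div]; norm_num; exact hw
    have := (separatedFromPoles_of_notMem_omegaSet hε0 hε1 hz).of_norm_sub_le
      (by positivity) hwz
    rwa [div_div, show (4 : ℝ) * 4 = 16 by norm_num] at this
  have hdiff : DifferentiableOn ℂ (gammaRec ω ℓ) (Metric.closedBall z r) := fun w hw =>
    (differentiableAt_gammaRec (fun n hn => (hsep w hw).sub_ne_zero (by positivity) hn)
      ℓ).differentiableWithinAt
  have hbound :
      ∀ w ∈ Metric.sphere z r, ‖gammaRec ω ℓ w‖ ≤ 2 * (B + 1) * ℓ ^ B / (1 + ‖z‖) := by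
    intro w hw
    have hwz : ‖z‖ ≤ ‖w‖ + r := by
      rw [← Metric.mem_sphere'.mp hw, dist_eq_norm]
      exact norm_le_norm_add_norm_sub' z w
    have hw' : (1 + ‖z‖) / 2 ≤ 1 + ‖w‖ := by
      simp only [r] at hwz
      nlinarith [mul_le_mul_of_nonneg_right hε1.le (by positivity : (0 : ℝ) ≤ 1 + ‖z‖)]
    calc ‖gammaRec ω ℓ w‖ ≤ (B + 1) * ℓ ^ B / (1 + ‖w‖) :=
          norm_gammaRec_le (by positivity) hA hω (by linarith)
            (hsep w (Metric.sphere_subset_closedBall hw)) ℓ hℓ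
      _ ≤ (B + 1) * ℓ ^ B / ((1 + ‖z‖) / 2) := by gcongr
      _ = 2 * (B + 1) * ℓ ^ B / (1 + ‖z‖) := by field_simp
  refine (Complex.norm_iteratedDeriv_le_of_forall_mem_sphere_norm_le h hr
    (hdiff.diffContOnCl_ball subset_rfl) hbound).trans_eq ?_
  rw [mul_pow, div_pow, div_pow, pow_succ]
  field_simp

/-- Given `ε ∈ (0,1)`, `A ≥ 0`, coefficients `ω` with `|ω_j| ≤ A·j`, and the
recursively defined functions `Γ_ℓ`, each `Γ_ℓ` is holomorphic on the open set
`ℂ ∖ Ω_ε`, and there is `d > 0` such that for every `h ∈ ℕ` there is `C > 0`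
with `|∂_λ^h Γ_ℓ(λ)| ≤ C ℓ^d (1 + |λ|)^{-h-1}` for all `ℓ ≥ 1` and
`λ ∈ ℂ ∖ Ω_ε`. -/
theorem stmt2 (ε : ℝ) (hε0 : 0 < ε) (hε1 : ε < 1)
    (A : ℝ) (hA : 0 ≤ A) (ω : ℕ → ℂ)
    (hω : ∀ j : ℕ, 1 ≤ j → ‖ω j‖ ≤ A * j)
    (Γ : ℕ → ℂ → ℂ)
    (hΓ0 : ∀ z : ℂ, Γ 0 z = 1)
    (hΓ : ∀ ℓ : ℕ, 1 ≤ ℓ → ∀ z : ℂ, z ∉ OmegaSet ε →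
      Γ ℓ z = ((ℓ : ℂ) * ((ℓ : ℂ) - 2 * Complex.I * z))⁻¹ *
        ∑ j ∈ Finset.range ℓ, ω (ℓ - j) * Γ j z) :
    (∀ ℓ : ℕ, DifferentiableOn ℂ (Γ ℓ) (OmegaSet ε)ᶜ) ∧
    ∃ d : ℝ, 0 < d ∧ ∀ h : ℕ, ∃ C : ℝ, 0 < C ∧
      ∀ ℓ : ℕ, 1 ≤ ℓ → ∀ z : ℂ, z ∉ OmegaSet ε →
        ‖iteratedDerivWithin h (Γ ℓ) (OmegaSet ε)ᶜ z‖ ≤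
          C * (ℓ : ℝ) ^ d * (1 + ‖z‖) ^ (-(h : ℝ) - 1) := by
  have hΓeq : ∀ ℓ, Set.EqOn (Γ ℓ) (gammaRec ω ℓ) (OmegaSet ε)ᶜ := fun ℓ _ hz =>
    eq_gammaRec_of_recursion hΓ0 hΓ ℓ hz
  set B := ⌈32 * A / ε⌉₊ + 1
  have hB : 32 * A ≤ ε * (B + 1) := by
    have := Nat.le_ceil (32 * A / ε)
    rw [div_le_iff₀ hε0] at this
    simp only [B]
    push_cast
    linarith
  refine ⟨fun ℓ z hz => ?_, B, by positivity,
    fun h => ⟨h.factorial * (2 * (B + 1)) * (16 / ε) ^ h, by positivity, fun ℓ hℓ z hz => ?_⟩⟩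
  · have hsep := separatedFromPoles_of_notMem_omegaSet hε0 hε1 hz
    exact ((differentiableAt_gammaRec (fun n hn => hsep.sub_ne_zero (by positivity) hn)
      ℓ).differentiableWithinAt).congr (hΓeq ℓ) (hΓeq ℓ hz)
  · rw [iteratedDerivWithin_congr (hΓeq ℓ) hz,
      iteratedDerivWithin_of_isOpen (isOpen_omegaSet_compl ε) hz, Real.rpow_natCast,
      show -(h : ℝ) - 1 = -((h + 1 : ℕ) : ℝ) by push_cast; ring, Real.rpow_neg (by positivity),
      Real.rpow_natCast, ← div_eq_mul_inv]
    exact norm_iteratedDeriv_gammaRec_le hε0 hε1 hA hω hB h ℓ hℓ hz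
end

section
/- Let ν > −1 and R > 0. Let b : ℝ → ℂ be smooth on ℝ ∖ {0}, vanish outside [−R, R], and satisfy M_ℓ := sup_{λ≠0} |λ|^{ℓ−ν} |b^{(ℓ)}(λ)| < ∞ for every ℓ ∈ ℕ. Let N be the smallest integer strictly greater than ν + 1. Then the integral k(x) = ∫₀^∞ b(λ) e^{iλx} dλ converges absolutely for every x ∈ ℝ, and there exists a constant C ≥ 0, depending only on ν and R, such that |k(x)| ≤ C · |x|^{−ν−1} · Σ_{ℓ=0}^{N} M_ℓ for every x ≠ 0. -/
/-!
Split `k(x) = ∫₀^∞ b(λ) e^{iλx} dλ` at `δ = |x|⁻¹`. Near `0` the bound `|b(λ)| ≤ M₀ λ^ν` gives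
`M₀ δ^{ν+1} / (ν+1)`. On `[δ, ∞)` integrate by parts `N` times: each step costs a factor `δ`
and leaves a boundary term `|b^{(j)}(δ)| δ^{j+1} ≤ M_j δ^{ν+1}`, and since `ν - N < -1` the last
integral is at most `M_N δ^N ∫_δ^∞ λ^{ν-N} dλ = M_N δ^{ν+1} / (N-ν-1)`. As `N` is an integer
above `ν + 1`, `N - ν - 1 ≥ 1 - fract (ν + 1)`, so the constant depends on `ν` alone.
-/

open MeasureTheory Set

theorem ContDiffAt.hasDerivAt_iteratedDeriv {𝕜 F : Type*} [NontriviallyNormedField 𝕜]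
    [NormedAddCommGroup F] [NormedSpace 𝕜 F] {f : 𝕜 → F} {n : WithTop ℕ∞} {m : ℕ} {x : 𝕜}
    (hf : ContDiffAt 𝕜 n f x) (hmn : (m : WithTop ℕ∞) < n) :
    HasDerivAt (iteratedDeriv m f) (iteratedDeriv (m + 1) f x) x := by
  have hd : DifferentiableAt 𝕜 (iteratedDeriv m f) x := by
    rw [iteratedDeriv_eq_equiv_comp]
    exact DifferentiableAt.comp x (LinearIsometryEquiv.differentiableAt _)
      (hf.differentiableAt_iteratedFDeriv hmn)
  rw [iteratedDeriv_succ]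
  exact hd.hasDerivAt

theorem norm_cexp_I_mul_ofReal_mul_ofReal (l x : ℝ) : ‖Complex.exp (Complex.I * l * x)‖ = 1 := by
  simp [Complex.norm_exp]

theorem hasDerivAt_cexp_I_mul_div {x : ℝ} (hx : x ≠ 0) (l : ℝ) :
    HasDerivAt (fun l : ℝ => Complex.exp (Complex.I * l * x) / (Complex.I * x))
      (Complex.exp (Complex.I * l * x)) l := by
  have hx' : (x : ℂ) ≠ 0 := by exact_mod_cast hx
  have := (((hasDerivAt_id (l : ℂ)).mul_const (Complex.I * x)).cexp.div_const
    (Complex.I * x)).comp_ofReal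
  convert this using 2 <;> simp only [id] <;> field_simp

theorem integral_mul_cexp_eq_of_eq_zero {g g' : ℝ → ℂ} {a T x : ℝ} (hx : x ≠ 0)
    (hg : ∀ y ∈ uIcc a T, HasDerivAt g (g' y) y) (hg' : IntervalIntegrable g' volume a T)
    (hT : g T = 0) :
    ∫ l in a..T, g l * Complex.exp (Complex.I * l * x) =
      -(g a * Complex.exp (Complex.I * a * x) +
        ∫ l in a..T, g' l * Complex.exp (Complex.I * l * x)) / (Complex.I * x) := by
  have hibp := intervalIntegral.integral_mul_deriv_eq_deriv_mul hg
    (fun y _ => hasDerivAt_cexp_I_mul_div hx y) hg'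
    ((Continuous.intervalIntegrable (by fun_prop) a T))
  simp only [hT, zero_mul, ← mul_div_assoc, intervalIntegral.integral_div] at hibp
  rw [hibp]
  ring

theorem norm_integral_mul_cexp_le {g g' : ℝ → ℂ} {a T x : ℝ} (hx : x ≠ 0)
    (hg : ∀ y ∈ uIcc a T, HasDerivAt g (g' y) y) (hg' : IntervalIntegrable g' volume a T)
    (hT : g T = 0) :
    ‖∫ l in a..T, g l * Complex.exp (Complex.I * l * x)‖ ≤
      |x|⁻¹ * (‖g a‖ + ‖∫ l in a..T, g' l * Complex.exp (Complex.I * l * x)‖) := by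
  rw [integral_mul_cexp_eq_of_eq_zero hx hg hg' hT, norm_div, norm_neg, norm_mul Complex.I,
    Complex.norm_I, one_mul, Complex.norm_real, Real.norm_eq_abs, inv_mul_eq_div]
  gcongr
  refine (norm_add_le _ _).trans ?_
  rw [norm_mul, norm_cexp_I_mul_ofReal_mul_ofReal, mul_one]

section RpowBounds

variable {E : Type*} [NormedAddCommGroup E] [NormedSpace ℝ E] {f : ℝ → E} {M : ℝ}

theorem norm_intervalIntegral_zero_le_of_norm_le_rpow {a ν : ℝ} (hν : -1 < ν) (ha : 0 ≤ a)
    (hf : ∀ l ∈ Ioc 0 a, ‖f l‖ ≤ M * l ^ ν) :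
    ‖∫ l in 0..a, f l‖ ≤ M * (a ^ (ν + 1) / (ν + 1)) := by
  refine (intervalIntegral.norm_integral_le_of_norm_le ha (ae_of_all _ hf)
    ((intervalIntegral.intervalIntegrable_rpow' hν).const_mul M)).trans_eq ?_
  rw [intervalIntegral.integral_const_mul, integral_rpow (Or.inl hν),
    Real.zero_rpow (by linarith), sub_zero]

theorem norm_intervalIntegral_le_of_norm_le_rpow_of_lt {δ T p : ℝ} (hp : p < -1) (hδ : 0 < δ)
    (hδT : δ ≤ T) (hM : 0 ≤ M) (hf : ∀ l ∈ Ioc δ T, ‖f l‖ ≤ M * l ^ p) :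
    ‖∫ l in δ..T, f l‖ ≤ M * (δ ^ (p + 1) / (-p - 1)) := by
  have h0 : (0 : ℝ) ∉ uIcc δ T := by
    rw [uIcc_of_le hδT]; exact fun h => hδ.not_ge h.1
  refine (intervalIntegral.norm_integral_le_of_norm_le hδT (ae_of_all _ hf)
    ((intervalIntegral.intervalIntegrable_rpow (Or.inr h0)).const_mul M)).trans ?_
  rw [intervalIntegral.integral_const_mul, integral_rpow (Or.inr ⟨by linarith, h0⟩)]
  have hflip :
      (T ^ (p + 1) - δ ^ (p + 1)) / (p + 1) = (δ ^ (p + 1) - T ^ (p + 1)) / (-p - 1) := by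
    rw [← neg_div_neg_eq]; ring_nf
  rw [hflip]
  gcongr
  · linarith
  · exact sub_le_self _ (Real.rpow_nonneg (hδ.le.trans hδT) _)

end RpowBounds

theorem integrableOn_Ioi_of_norm_le_rpow {E : Type*} [NormedAddCommGroup E] {f : ℝ → E}
    {M ν T : ℝ} (hν : -1 < ν) (hf : ContinuousOn f (Ioi 0))
    (hbound : ∀ l ∈ Ioi 0, ‖f l‖ ≤ M * l ^ ν) (hvanish : ∀ l ∈ Ioi T, f l = 0) :
    IntegrableOn f (Ioi 0) := by
  have hg : IntegrableOn (fun l => M * l ^ ν) (Ioc 0 T) :=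
    (((intervalIntegral.intervalIntegrable_rpow' hν).const_mul M).def'.mono_set
      Ioc_subset_uIoc)
  refine IntegrableOn.of_forall_sdiff_eq_zero ?_ measurableSet_Ioi
    fun l hl => hvanish l (lt_of_not_ge fun h => hl.2 (show l ∈ Ioc 0 T from ⟨hl.1, h⟩))
  refine hg.mono' ((hf.mono Ioc_subset_Ioi_self).aestronglyMeasurable measurableSet_Ioc) ?_
  exact (ae_restrict_iff' measurableSet_Ioc).2 (ae_of_all _ fun l hl => hbound l hl.1)

theorem norm_integral_mul_cexp_le_of_hasDerivAt_seq {f : ℕ → ℝ → ℂ} {M : ℕ → ℝ} {ν x T : ℝ}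
    {N : ℕ} (hN : ν + 1 < N) (hx : x ≠ 0) (hT : |x|⁻¹ ≤ T)
    (hderiv : ∀ j, ∀ l ∈ Icc |x|⁻¹ T, HasDerivAt (f j) (f (j + 1) l) l)
    (hbound : ∀ j, ∀ l ∈ Icc |x|⁻¹ T, ‖f j l‖ ≤ M j * l ^ (ν - j))
    (hvanish : ∀ j, f j T = 0) {j : ℕ} (hj : j ≤ N) :
    ‖∫ l in |x|⁻¹..T, f j l * Complex.exp (Complex.I * l * x)‖ ≤
      |x|⁻¹ ^ (ν + 1 - j) * (∑ i ∈ Finset.Ico j N, M i + M N / (N - ν - 1)) := by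
  set δ := |x|⁻¹
  have hδ : 0 < δ := inv_pos.2 (abs_pos.2 hx)
  have hδmem : δ ∈ Icc δ T := ⟨le_rfl, hT⟩
  induction hj using Nat.decreasingInduction with
  | self =>
    have hMN : 0 ≤ M N := nonneg_of_mul_nonneg_left ((norm_nonneg _).trans (hbound N δ hδmem))
      (Real.rpow_pos_of_pos hδ _)
    rw [Finset.Ico_self, Finset.sum_empty, zero_add, ← mul_div_assoc, mul_comm, mul_div_assoc]
    refine norm_intervalIntegral_le_of_norm_le_rpow_of_lt (p := ν - N) (by linarith) hδ hT hMN
      (fun l hl => ?_) |>.trans_eq (by ring_nf)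
    rw [norm_mul, norm_cexp_I_mul_ofReal_mul_ofReal, mul_one]
    exact hbound N l (Ioc_subset_Icc_self hl)
  | of_succ j hjN ih =>
    have hcont : ContinuousOn (f (j + 1)) (uIcc δ T) := fun l hl =>
      (hderiv (j + 1) l (uIcc_of_le hT ▸ hl)).continuousAt.continuousWithinAt
    calc ‖∫ l in δ..T, f j l * Complex.exp (Complex.I * l * x)‖
        ≤ δ * (‖f j δ‖ + ‖∫ l in δ..T, f (j + 1) l * Complex.exp (Complex.I * l * x)‖) :=
          norm_integral_mul_cexp_le hx (fun l hl => hderiv j l (uIcc_of_le hT ▸ hl))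
            hcont.intervalIntegrable (hvanish j)
      _ ≤ δ * (M j * δ ^ (ν - j) + δ ^ (ν + 1 - (j + 1 : ℕ)) *
            (∑ i ∈ Finset.Ico (j + 1) N, M i + M N / (N - ν - 1))) := by
          gcongr
          exact hbound j δ hδmem
      _ = δ ^ (ν + 1 - j) * (∑ i ∈ Finset.Ico j N, M i + M N / (N - ν - 1)) := by
          rw [Finset.sum_eq_sum_Ico_succ_bot hjN, Nat.cast_add_one,
            show ν + 1 - (j + 1 : ℝ) = ν - j by ring, show ν + 1 - (j : ℝ) = ν - j + 1 by ring,
            Real.rpow_add_one hδ.ne']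
          ring

theorem one_sub_fract_le_sub_of_lt {t : ℝ} {n : ℤ} (h : t < n) : 1 - Int.fract t ≤ n - t := by
  have h' : (⌊t⌋ : ℝ) + 1 ≤ n := by exact_mod_cast Int.floor_lt.2 h
  rw [Int.fract]
  linarith

theorem div_add_sum_range_add_div_le {M : ℕ → ℝ} {a c ε : ℝ} {N : ℕ} (hM : ∀ ℓ, 0 ≤ M ℓ)
    (ha : 0 < a) (hε : 0 < ε) (hεc : ε ≤ c) :
    M 0 / a + (∑ i ∈ Finset.range N, M i + M N / c) ≤
      (1 / a + 1 + ε⁻¹) * ∑ i ∈ Finset.range (N + 1), M i := by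
  set S := ∑ i ∈ Finset.range N, M i
  have hS : 0 ≤ S := Finset.sum_nonneg fun i _ => hM i
  have hMN := hM N
  have hM0 : M 0 ≤ S + M N := by
    rw [← Finset.sum_range_succ]
    exact Finset.single_le_sum (fun i _ => hM i) (Finset.mem_range.2 N.succ_pos)
  have hSε : 0 ≤ S / ε := by positivity
  rw [Finset.sum_range_succ]
  calc M 0 / a + (S + M N / c) ≤ (S + M N) / a + (S + M N / ε) := by gcongr
    _ ≤ (S + M N) / a + (S + M N / ε) + (M N + S / ε) := by linarith
    _ = (1 / a + 1 + ε⁻¹) * (S + M N) := by ring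

section Symbol

variable {b : ℝ → ℂ} {ν R : ℝ} {M : ℕ → ℝ}

theorem iteratedDeriv_eq_zero_of_lt (hsupp : ∀ l : ℝ, R < |l| → b l = 0) (j : ℕ) {l : ℝ}
    (hl : R < l) : iteratedDeriv j b l = 0 := by
  have hzero : EqOn b 0 (Ioi R) := fun y hy => hsupp y (lt_of_lt_of_le hy (le_abs_self y))
  rw [hzero.iteratedDeriv_of_isOpen isOpen_Ioi j hl, iteratedDeriv_const_zero]

theorem norm_iteratedDeriv_le_mul_rpow
    (hM : ∀ (ℓ : ℕ) (l : ℝ), l ≠ 0 → |l| ^ ((ℓ : ℝ) - ν) * ‖iteratedDeriv ℓ b l‖ ≤ M ℓ)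
    (ℓ : ℕ) {l : ℝ} (hl : 0 < l) : ‖iteratedDeriv ℓ b l‖ ≤ M ℓ * l ^ (ν - ℓ) := by
  have h := hM ℓ l hl.ne'
  rw [abs_of_pos hl, ← le_div_iff₀' (Real.rpow_pos_of_pos hl _), div_eq_mul_inv,
    ← Real.rpow_neg hl.le, neg_sub] at h
  exact h

theorem integrableOn_Ioi_mul_cexp (hν : -1 < ν) (hb : ContDiffOn ℝ (⊤ : ℕ∞) b {(0 : ℝ)}ᶜ)
    (hsupp : ∀ l : ℝ, R < |l| → b l = 0)
    (hM : ∀ (ℓ : ℕ) (l : ℝ), l ≠ 0 → |l| ^ ((ℓ : ℝ) - ν) * ‖iteratedDeriv ℓ b l‖ ≤ M ℓ)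
    (x : ℝ) : IntegrableOn (fun l : ℝ => b l * Complex.exp (Complex.I * l * x)) (Ioi 0) := by
  refine integrableOn_Ioi_of_norm_le_rpow (M := M 0) (T := R) hν
    ((hb.continuousOn.mono fun l (hl : 0 < l) => hl.ne').mul (by fun_prop))
    (fun l hl => ?_) (fun l hl => ?_)
  · rw [norm_mul, norm_cexp_I_mul_ofReal_mul_ofReal, mul_one]
    simpa using norm_iteratedDeriv_le_mul_rpow hM 0 hl
  · rw [hsupp l (lt_of_lt_of_le hl (le_abs_self l)), zero_mul]

theorem norm_integral_Ioi_mul_cexp_le (hν : -1 < ν) (hb : ContDiffOn ℝ (⊤ : ℕ∞) b {(0 : ℝ)}ᶜ)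
    (hsupp : ∀ l : ℝ, R < |l| → b l = 0)
    (hM : ∀ (ℓ : ℕ) (l : ℝ), l ≠ 0 → |l| ^ ((ℓ : ℝ) - ν) * ‖iteratedDeriv ℓ b l‖ ≤ M ℓ)
    {N : ℕ} (hN : ν + 1 < N) {x : ℝ} (hx : x ≠ 0) :
    ‖∫ l in Ioi (0 : ℝ), b l * Complex.exp (Complex.I * l * x)‖ ≤
      |x| ^ (-ν - 1) * (M 0 / (ν + 1) + (∑ i ∈ Finset.range N, M i + M N / (N - ν - 1))) := by
  set f := fun l : ℝ => b l * Complex.exp (Complex.I * l * x) with hf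
  set δ := |x|⁻¹ with hδ_def
  have hδ : 0 < δ := inv_pos.2 (abs_pos.2 hx)
  set T := max R δ + 1
  have hδT : δ ≤ T := (le_max_right R δ).trans (le_add_of_nonneg_right zero_le_one)
  have hRT : R < T := lt_add_of_le_of_pos (le_max_left R δ) zero_lt_one
  have hint := integrableOn_Ioi_mul_cexp hν hb hsupp hM x
  have hsplit : ∫ l in Ioi 0, f l = (∫ l in 0..δ, f l) + ∫ l in δ..T, f l := by
    rw [intervalIntegral.integral_add_adjacent_intervals
      ((intervalIntegrable_iff_integrableOn_Ioc_of_le hδ.le).2 (hint.mono_set Ioc_subset_Ioi_self))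
      ((intervalIntegrable_iff_integrableOn_Ioc_of_le hδT).2
        (hint.mono_set (Ioc_subset_Ioi_self.trans (Ioi_subset_Ioi hδ.le)))),
      intervalIntegral.integral_of_le (hδ.le.trans hδT)]
    refine setIntegral_eq_of_subset_of_forall_sdiff_eq_zero measurableSet_Ioi
      Ioc_subset_Ioi_self fun l hl => ?_
    have hTl : T < l := lt_of_not_ge fun h => hl.2 (show l ∈ Ioc 0 T from ⟨hl.1, h⟩)
    show b l * _ = 0
    rw [hsupp l ((hRT.trans hTl).trans_le (le_abs_self l)), zero_mul]
  have hnear : ‖∫ l in 0..δ, f l‖ ≤ M 0 * (δ ^ (ν + 1) / (ν + 1)) := by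
    refine norm_intervalIntegral_zero_le_of_norm_le_rpow hν hδ.le fun l hl => ?_
    rw [hf, norm_mul, norm_cexp_I_mul_ofReal_mul_ofReal, mul_one]
    simpa using norm_iteratedDeriv_le_mul_rpow hM 0 hl.1
  have hfar := norm_integral_mul_cexp_le_of_hasDerivAt_seq (f := fun j => iteratedDeriv j b)
    hN hx hδT
    (fun j l hl => (hb.contDiffAt (isOpen_compl_singleton.mem_nhds (hδ.trans_le hl.1).ne'))
      |>.hasDerivAt_iteratedDeriv (by exact_mod_cast WithTop.coe_lt_top j))
    (fun j l hl => norm_iteratedDeriv_le_mul_rpow hM j (hδ.trans_le hl.1))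
    (fun j => iteratedDeriv_eq_zero_of_lt hsupp j hRT) (Nat.zero_le N)
  simp only [iteratedDeriv_zero, Nat.cast_zero, sub_zero, ← Finset.range_eq_Ico] at hfar
  have hxδ : |x| ^ (-ν - 1) = δ ^ (ν + 1) := by
    rw [hδ_def, Real.inv_rpow (abs_nonneg x), ← Real.rpow_neg (abs_nonneg x), neg_add']
  calc ‖∫ l in Ioi 0, f l‖ ≤ ‖∫ l in 0..δ, f l‖ + ‖∫ l in δ..T, f l‖ :=
        hsplit ▸ norm_add_le _ _
    _ ≤ M 0 * (δ ^ (ν + 1) / (ν + 1)) +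
          δ ^ (ν + 1) * (∑ i ∈ Finset.range N, M i + M N / (N - ν - 1)) := add_le_add hnear hfar
    _ = _ := by rw [hxδ]; ring

end Symbol

theorem stmt7_general (ν R : ℝ) (hν : -1 < ν) :
    ∃ C : ℝ, 0 ≤ C ∧
      ∀ (b : ℝ → ℂ) (M : ℕ → ℝ) (N : ℕ),
        ContDiffOn ℝ (⊤ : ℕ∞) b {(0 : ℝ)}ᶜ →
        (∀ l : ℝ, R < |l| → b l = 0) →
        (∀ (ℓ : ℕ) (l : ℝ), l ≠ 0 →
          |l| ^ ((ℓ : ℝ) - ν) * ‖iteratedDeriv ℓ b l‖ ≤ M ℓ) →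
        ν + 1 < (N : ℝ) → (N : ℝ) - 1 ≤ ν + 1 →
        (∀ x : ℝ, IntegrableOn
          (fun l : ℝ => b l * Complex.exp (Complex.I * l * x)) (Ioi 0)) ∧
        ∀ x : ℝ, x ≠ 0 →
          ‖∫ l in Ioi (0 : ℝ), b l * Complex.exp (Complex.I * l * x)‖ ≤
            C * |x| ^ (-ν - 1) * ∑ ℓ ∈ Finset.range (N + 1), M ℓ := by
  have hν1 : 0 < ν + 1 := by linarith
  set ε := 1 - Int.fract (ν + 1)
  have hε : 0 < ε := sub_pos.2 (Int.fract_lt_one _)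
  refine ⟨1 / (ν + 1) + 1 + ε⁻¹, by positivity, fun b M N hb hsupp hM hN _ => ?_⟩
  refine ⟨integrableOn_Ioi_mul_cexp hν hb hsupp hM, fun x hx => ?_⟩
  refine (norm_integral_Ioi_mul_cexp_le hν hb hsupp hM hN hx).trans ?_
  have hMnn : ∀ ℓ, 0 ≤ M ℓ := fun ℓ =>
    (norm_nonneg _).trans (by simpa using hM ℓ 1 one_ne_zero)
  have hεN : ε ≤ N - ν - 1 := by
    have h := one_sub_fract_le_sub_of_lt (n := N) (by exact_mod_cast hN)
    rw [Int.cast_natCast] at h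
    linarith
  rw [mul_comm _ (|x| ^ _), mul_assoc]
  gcongr
  exact div_add_sum_range_add_div_le hMnn hν1 hε hεN

/-- Lemma A.1: for a compactly supported homogeneous symbol `b` of order
`ν > -1` (smooth away from `0`, vanishing outside `[-R, R]`, with
`M_ℓ = sup_{λ≠0} |λ|^{ℓ-ν} |b^{(ℓ)}(λ)| < ∞`), the Fourier-type integral
`k(x) = ∫₀^∞ b(λ) e^{iλx} dλ` converges absolutely, and with `N` the smallest
integer `> ν + 1` one has `|k(x)| ≤ C |x|^{-ν-1} Σ_{ℓ=0}^N M_ℓ`, where `C`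
depends only on `ν` and `R`. -/
theorem stmt7 (ν R : ℝ) (hν : -1 < ν) (hR : 0 < R) :
    ∃ C : ℝ, 0 ≤ C ∧
      ∀ (b : ℝ → ℂ) (M : ℕ → ℝ) (N : ℕ),
        ContDiffOn ℝ (⊤ : ℕ∞) b {(0 : ℝ)}ᶜ →
        (∀ l : ℝ, R < |l| → b l = 0) →
        (∀ (ℓ : ℕ) (l : ℝ), l ≠ 0 →
          |l| ^ ((ℓ : ℝ) - ν) * ‖iteratedDeriv ℓ b l‖ ≤ M ℓ) →
        ν + 1 < (N : ℝ) → (N : ℝ) - 1 ≤ ν + 1 →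
        (∀ x : ℝ, IntegrableOn
          (fun l : ℝ => b l * Complex.exp (Complex.I * l * x)) (Ioi 0)) ∧
        ∀ x : ℝ, x ≠ 0 →
          ‖∫ l in Ioi (0 : ℝ), b l * Complex.exp (Complex.I * l * x)‖ ≤
            C * |x| ^ (-ν - 1) * ∑ ℓ ∈ Finset.range (N + 1), M ℓ :=
  stmt7_general ν R hν
end

section
/- Let b : ℝ → ℂ be a smooth function with M_ℓ := sup_{λ∈ℝ} (1+|λ|)^{ℓ+1} |b^{(ℓ)}(λ)| < ∞ for every ℓ ∈ ℕ (i.e. b is an inhomogeneous symbol of order −1), and let k(x) = lim_{T→∞} ∫_{−T}^{T} b(λ) e^{iλx} dλ (which exists for every x ≠ 0). Then there exists a constant C ≥ 0 such that |k(x)| ≤ C · log(1/|x|) · ( sup_{λ∈ℝ} (1+|λ|)|b(λ)| + sup_{λ∈ℝ} (1+|λ|)²|b′(λ)| ) for every x with 0 < |x| < 1/2. -/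
open Filter MeasureTheory Set Complex

/-!
Write `A` and `B` for the two suprema. Integrating by parts against `e^{iλx}/(ix)` on `[R, ∞)`
leaves a boundary term of size `|b(R)|/|x| ≤ A/((1+R)|x|)` and a tail `∫_R^∞ |b'|/|x|` of size
`≤ B/((1+R)|x|)`; in particular the improper integral converges. On `[0, R]` the trivial bound
`|b(λ)| ≤ A/(1+λ)` gives `A log(1+R)`. The half-line `(-∞, 0]` is the same problem for
`λ ↦ b(-λ)` and `-x`, which satisfy the same weighted bounds. Choosing `R = 1/|x|` balances the
two contributions and gives `|k(x)| ≲ log(1/|x|) (A + B)`.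
-/

lemma hasDerivAt_neg_inv_one_add {l : ℝ} (hl : -1 < l) :
    HasDerivAt (fun l : ℝ => -(1 + l)⁻¹) ((1 + l) ^ 2)⁻¹ l := by
  have h := (((hasDerivAt_id l).const_add 1).fun_inv (by simp; linarith)).fun_neg
  simpa [neg_div] using h

lemma tendsto_neg_inv_one_add_atTop : Tendsto (fun l : ℝ => -(1 + l)⁻¹) atTop (nhds 0) := by
  simpa using (tendsto_atTop_add_const_left atTop (1 : ℝ) tendsto_id).inv_tendsto_atTop.neg

lemma integrableOn_Ioi_inv_one_add_pow_two {R : ℝ} (hR : -1 < R) :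
    IntegrableOn (fun l : ℝ => ((1 + l) ^ 2)⁻¹) (Ioi R) :=
  integrableOn_Ioi_deriv_of_nonneg' (fun _ hl => hasDerivAt_neg_inv_one_add (hR.trans_le hl))
    (fun _ _ => by positivity) tendsto_neg_inv_one_add_atTop

lemma integral_Ioi_inv_one_add_pow_two {R : ℝ} (hR : -1 < R) :
    ∫ l in Ioi R, ((1 + l) ^ 2)⁻¹ = (1 + R)⁻¹ := by
  rw [integral_Ioi_of_hasDerivAt_of_nonneg'
    (fun _ hl => hasDerivAt_neg_inv_one_add (hR.trans_le hl))
    (fun _ _ => by positivity) tendsto_neg_inv_one_add_atTop]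
  ring

lemma integral_inv_one_add {R : ℝ} (hR : -1 < R) :
    ∫ l in (0 : ℝ)..R, (1 + l)⁻¹ = Real.log (1 + R) := by
  rw [intervalIntegral.integral_comp_add_left (fun l => l⁻¹) 1, integral_inv, add_zero, div_one]
  rw [mem_uIcc]
  rintro (h | h) <;> linarith [h.1, h.2]

lemma norm_exp_I_mul_ofReal_mul (l x : ℝ) : ‖exp (I * l * x)‖ = 1 := by
  rw [show I * l * x = ((l * x : ℝ) : ℂ) * I by push_cast; ring]
  exact norm_exp_ofReal_mul_I _

lemma norm_exp_I_mul_ofReal_mul_div (l x : ℝ) : ‖exp (I * l * x) / (I * x)‖ = |x|⁻¹ := by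
  simp [norm_exp_I_mul_ofReal_mul]

lemma hasDerivAt_exp_I_mul_ofReal_mul_div {x : ℝ} (hx : x ≠ 0) (l : ℝ) :
    HasDerivAt (fun l : ℝ => exp (I * l * x) / (I * x)) (exp (I * l * x)) l := by
  have h : HasDerivAt (fun l : ℝ => I * l * x) (I * x) l := by
    simpa using ((hasDerivAt_id l).ofReal_comp.const_mul I).mul_const (x : ℂ)
  have h' := h.cexp.div_const (I * x)
  rwa [mul_div_cancel_right₀ _ (by simp [hx])] at h'

section Symbol

variable {b : ℝ → ℂ} {A B x : ℝ}

lemma integral_mul_exp_eq (hb : ContDiff ℝ 1 b) (hx : x ≠ 0) (a T : ℝ) :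
    ∫ l in a..T, b l * exp (I * l * x) =
      b T * (exp (I * T * x) / (I * x)) - b a * (exp (I * a * x) / (I * x)) -
        ∫ l in a..T, deriv b l * (exp (I * l * x) / (I * x)) :=
  intervalIntegral.integral_mul_deriv_eq_deriv_mul
    (fun l _ => (hb.differentiable one_ne_zero l).hasDerivAt)
    (fun l _ => hasDerivAt_exp_I_mul_ofReal_mul_div hx l)
    ((hb.continuous_deriv le_rfl).intervalIntegrable _ _)
    ((by fun_prop : Continuous fun l : ℝ => exp (I * l * x)).intervalIntegrable _ _)

lemma norm_le_div_one_add_abs (hA : ∀ l, (1 + |l|) * ‖b l‖ ≤ A) (l : ℝ) :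
    ‖b l‖ ≤ A / (1 + |l|) :=
  (le_div_iff₀' (by positivity)).2 (hA l)

lemma norm_mul_exp_div_le (hA : ∀ l, (1 + |l|) * ‖b l‖ ≤ A) (l : ℝ) :
    ‖b l * (exp (I * l * x) / (I * x))‖ ≤ A / (1 + |l|) * |x|⁻¹ := by
  rw [norm_mul, norm_exp_I_mul_ofReal_mul_div]
  gcongr
  exact norm_le_div_one_add_abs hA l

lemma tendsto_mul_exp_div_atTop (hA : ∀ l, (1 + |l|) * ‖b l‖ ≤ A) :
    Tendsto (fun T => b T * (exp (I * T * x) / (I * x))) atTop (nhds 0) := by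
  have hbound : Tendsto (fun T : ℝ => A / (1 + |T|) * |x|⁻¹) atTop (nhds 0) := by
    simpa using ((tendsto_const_nhds (x := A)).div_atTop
      (tendsto_atTop_add_const_left atTop 1 tendsto_abs_atTop_atTop)).mul_const |x|⁻¹
  exact squeeze_zero_norm (norm_mul_exp_div_le hA) hbound

lemma norm_deriv_mul_exp_div_le (hB : ∀ l, (1 + |l|) ^ 2 * ‖deriv b l‖ ≤ B) {l : ℝ}
    (hl : 0 ≤ l) : ‖deriv b l * (exp (I * l * x) / (I * x))‖ ≤ B / |x| * ((1 + l) ^ 2)⁻¹ := by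
  rw [norm_mul, norm_exp_I_mul_ofReal_mul_div]
  calc ‖deriv b l‖ * |x|⁻¹ ≤ B / (1 + |l|) ^ 2 * |x|⁻¹ := by
        gcongr
        exact (le_div_iff₀' (by positivity)).2 (hB l)
    _ = B / |x| * ((1 + l) ^ 2)⁻¹ := by rw [abs_of_nonneg hl]; ring

lemma integrableOn_Ioi_deriv_mul_exp_div (hb : ContDiff ℝ 1 b)
    (hB : ∀ l, (1 + |l|) ^ 2 * ‖deriv b l‖ ≤ B) {R : ℝ} (hR : 0 ≤ R) :
    IntegrableOn (fun l => deriv b l * (exp (I * l * x) / (I * x))) (Ioi R) :=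
  ((integrableOn_Ioi_inv_one_add_pow_two (by linarith)).const_mul (B / |x|)).mono'
    ((hb.continuous_deriv le_rfl).mul (by fun_prop)).aestronglyMeasurable
    (ae_restrict_of_forall_mem measurableSet_Ioi fun _ hl =>
      norm_deriv_mul_exp_div_le hB (hR.trans hl.out.le))

lemma norm_setIntegral_Ioi_deriv_mul_exp_div_le
    (hB : ∀ l, (1 + |l|) ^ 2 * ‖deriv b l‖ ≤ B) {R : ℝ} (hR : 0 ≤ R) :
    ‖∫ l in Ioi R, deriv b l * (exp (I * l * x) / (I * x))‖ ≤ B / |x| * (1 + R)⁻¹ := by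
  rw [← integral_Ioi_inv_one_add_pow_two (R := R) (by linarith), ← integral_const_mul]
  exact norm_integral_le_of_norm_le
    ((integrableOn_Ioi_inv_one_add_pow_two (by linarith)).const_mul _)
    (ae_restrict_of_forall_mem measurableSet_Ioi fun _ hl =>
      norm_deriv_mul_exp_div_le hB (hR.trans hl.out.le))

lemma exists_tendsto_integral_mul_exp_tail (hb : ContDiff ℝ 1 b)
    (hA : ∀ l, (1 + |l|) * ‖b l‖ ≤ A) (hB : ∀ l, (1 + |l|) ^ 2 * ‖deriv b l‖ ≤ B)
    (hx : x ≠ 0) {R : ℝ} (hR : 0 ≤ R) :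
    ∃ s, Tendsto (fun T => ∫ l in R..T, b l * exp (I * l * x)) atTop (nhds s) ∧
      ‖s‖ ≤ (A + B) / ((1 + R) * |x|) := by
  set v : ℝ → ℂ := fun l => exp (I * l * x) / (I * x)
  refine ⟨-(b R * v R) - ∫ l in Ioi R, deriv b l * v l, ?_, ?_⟩
  · have h := ((tendsto_mul_exp_div_atTop (x := x) hA).sub_const (b R * v R)).sub
      (intervalIntegral_tendsto_integral_Ioi R
        (integrableOn_Ioi_deriv_mul_exp_div (x := x) hb hB hR) tendsto_id)
    rw [zero_sub] at h
    exact h.congr fun T => (integral_mul_exp_eq hb hx R T).symm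
  · have hboundary : ‖b R * v R‖ ≤ A / (1 + R) * |x|⁻¹ := by
      simpa only [abs_of_nonneg hR] using norm_mul_exp_div_le (x := x) hA R
    calc ‖-(b R * v R) - ∫ l in Ioi R, deriv b l * v l‖
        ≤ ‖b R * v R‖ + ‖∫ l in Ioi R, deriv b l * v l‖ :=
          (norm_sub_le _ _).trans_eq (by rw [norm_neg])
      _ ≤ A / (1 + R) * |x|⁻¹ + B / |x| * (1 + R)⁻¹ :=
          add_le_add hboundary (norm_setIntegral_Ioi_deriv_mul_exp_div_le hB hR)
      _ = (A + B) / ((1 + R) * |x|) := by field_simp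

lemma norm_integral_zero_mul_exp_le (hA : ∀ l, (1 + |l|) * ‖b l‖ ≤ A)
    {R : ℝ} (hR : 0 ≤ R) :
    ‖∫ l in (0 : ℝ)..R, b l * exp (I * l * x)‖ ≤ A * Real.log (1 + R) := by
  rw [← integral_inv_one_add (by linarith), ← intervalIntegral.integral_const_mul]
  refine intervalIntegral.norm_integral_le_of_norm_le hR
    (Eventually.of_forall fun l hl => ?_) ?_
  · rw [norm_mul, norm_exp_I_mul_ofReal_mul, mul_one, ← div_eq_mul_inv]
    simpa only [abs_of_pos hl.1] using norm_le_div_one_add_abs hA l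
  · refine ContinuousOn.intervalIntegrable (continuousOn_const.mul (.inv₀ (by fun_prop) ?_))
    intro l hl
    rw [uIcc_of_le hR] at hl
    linarith [hl.1]

lemma exists_tendsto_integral_zero_mul_exp (hb : ContDiff ℝ 1 b)
    (hA : ∀ l, (1 + |l|) * ‖b l‖ ≤ A) (hB : ∀ l, (1 + |l|) ^ 2 * ‖deriv b l‖ ≤ B)
    (hx : x ≠ 0) :
    ∃ t, Tendsto (fun T => ∫ l in (0 : ℝ)..T, b l * exp (I * l * x)) atTop (nhds t) ∧
      ∀ R, 0 ≤ R → ‖t‖ ≤ A * Real.log (1 + R) + (A + B) / ((1 + R) * |x|) := by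
  obtain ⟨t, ht, -⟩ := exists_tendsto_integral_mul_exp_tail hb hA hB hx le_rfl
  refine ⟨t, ht, fun R hR => ?_⟩
  obtain ⟨s, hs, hs_le⟩ := exists_tendsto_integral_mul_exp_tail hb hA hB hx hR
  have hf : Continuous fun l : ℝ => b l * exp (I * l * x) := by
    have := hb.continuous; fun_prop
  have hsplit : t = (∫ l in (0 : ℝ)..R, b l * exp (I * l * x)) + s :=
    tendsto_nhds_unique ht <| (hs.const_add _).congr fun T =>
      intervalIntegral.integral_add_adjacent_intervals (hf.intervalIntegrable _ _)
        (hf.intervalIntegrable _ _)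
  rw [hsplit]
  exact (norm_add_le _ _).trans (add_le_add (norm_integral_zero_mul_exp_le hA hR) hs_le)

lemma weighted_bound_comp_neg (hA : ∀ l, (1 + |l|) * ‖b l‖ ≤ A) (l : ℝ) :
    (1 + |l|) * ‖b (-l)‖ ≤ A := by
  simpa only [abs_neg] using hA (-l)

lemma weighted_deriv_bound_comp_neg (hB : ∀ l, (1 + |l|) ^ 2 * ‖deriv b l‖ ≤ B) (l : ℝ) :
    (1 + |l|) ^ 2 * ‖deriv (fun l => b (-l)) l‖ ≤ B := by
  simpa only [deriv_comp_neg, norm_neg, abs_neg] using hB (-l)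

lemma integral_neg_zero_mul_exp (T : ℝ) :
    ∫ l in (-T)..0, b l * exp (I * l * x) = ∫ l in (0 : ℝ)..T, b (-l) * exp (I * l * (-x : ℝ)) := by
  rw [← neg_zero, ← intervalIntegral.integral_comp_neg, neg_zero]
  simp only [ofReal_neg, mul_neg, neg_mul]

lemma exists_tendsto_integral_mul_exp (hb : ContDiff ℝ 1 b)
    (hA : ∀ l, (1 + |l|) * ‖b l‖ ≤ A) (hB : ∀ l, (1 + |l|) ^ 2 * ‖deriv b l‖ ≤ B)
    (hx : x ≠ 0) :
    ∃ k, Tendsto (fun T => ∫ l in (-T)..T, b l * exp (I * l * x)) atTop (nhds k) ∧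
      ∀ R, 0 ≤ R → ‖k‖ ≤ 2 * (A * Real.log (1 + R) + (A + B) / ((1 + R) * |x|)) := by
  obtain ⟨t₁, ht₁, ht₁_le⟩ := exists_tendsto_integral_zero_mul_exp hb hA hB hx
  have hb_neg : ContDiff ℝ 1 fun l => b (-l) := hb.comp contDiff_neg
  obtain ⟨t₂, ht₂, ht₂_le⟩ := exists_tendsto_integral_zero_mul_exp hb_neg
    (weighted_bound_comp_neg hA) (weighted_deriv_bound_comp_neg hB) (neg_ne_zero.2 hx)
  have hf : Continuous fun l : ℝ => b l * exp (I * l * x) := by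
    have := hb.continuous; fun_prop
  refine ⟨t₂ + t₁, (ht₂.add ht₁).congr fun T => ?_, fun R hR => ?_⟩
  · rw [← integral_neg_zero_mul_exp, intervalIntegral.integral_add_adjacent_intervals
      (hf.intervalIntegrable _ _) (hf.intervalIntegrable _ _)]
  · have h₂ := ht₂_le R hR
    rw [abs_neg] at h₂
    linarith [norm_add_le t₂ t₁, ht₁_le R hR]

end Symbol

lemma one_le_two_mul_log_one_div {y : ℝ} (hy0 : 0 < y) (hy : y < 1 / 2) :
    1 ≤ 2 * Real.log (1 / y) := by
  have h2 : Real.log 2 ≤ Real.log (1 / y) :=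
    Real.log_le_log two_pos (by rw [le_div_iff₀ hy0]; linarith)
  linarith [Real.log_two_gt_d9]

lemma log_one_add_inv_le {y : ℝ} (hy0 : 0 < y) (hy : y ≤ 1 / 2) :
    Real.log (1 + y⁻¹) ≤ 2 * Real.log (1 / y) := by
  have h2 : 2 ≤ y⁻¹ := by rw [le_inv_comm₀ two_pos hy0]; linarith
  rw [one_div, ← Nat.cast_two, ← Real.log_pow]
  exact Real.log_le_log (by positivity) (by nlinarith)

/-- Lemma A.2(ii), case `ν = -1`: for an inhomogeneous symbol `b` of order `-1`
(`sup_λ (1+|λ|)^{ℓ+1} |b^{(ℓ)}(λ)| < ∞` for every `ℓ`), the improper integral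
`k(x) = lim_{T→∞} ∫_{-T}^T b(λ) e^{iλx} dλ` exists for `x ≠ 0`, and there is
`C ≥ 0` with
`|k(x)| ≤ C log(1/|x|) (sup_λ (1+|λ|)|b(λ)| + sup_λ (1+|λ|)²|b'(λ)|)`
for all `0 < |x| < 1/2`. -/
theorem stmt10 (b : ℝ → ℂ) (hb : ContDiff ℝ (⊤ : ℕ∞) b)
    (hM : ∀ ℓ : ℕ, ∃ M : ℝ, ∀ l : ℝ,
      (1 + |l|) ^ (ℓ + 1) * ‖iteratedDeriv ℓ b l‖ ≤ M) :
    (∀ x : ℝ, x ≠ 0 → ∃ k : ℂ,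
      Tendsto (fun T : ℝ => ∫ l in (-T)..T, b l * Complex.exp (Complex.I * l * x))
        atTop (nhds k)) ∧
    ∃ C : ℝ, 0 ≤ C ∧
      ∀ x : ℝ, 0 < |x| → |x| < 1 / 2 → ∀ k : ℂ,
        Tendsto (fun T : ℝ => ∫ l in (-T)..T, b l * Complex.exp (Complex.I * l * x))
          atTop (nhds k) →
        ‖k‖ ≤ C * Real.log (1 / |x|) *
          ((⨆ l : ℝ, (1 + |l|) * ‖b l‖) +
            (⨆ l : ℝ, (1 + |l|) ^ 2 * ‖deriv b l‖)) := by
  set A := ⨆ l : ℝ, (1 + |l|) * ‖b l‖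
  set B := ⨆ l : ℝ, (1 + |l|) ^ 2 * ‖deriv b l‖
  have hA : ∀ l, (1 + |l|) * ‖b l‖ ≤ A := by
    obtain ⟨M, hM⟩ := hM 0
    exact le_ciSup ⟨M, forall_mem_range.2 fun l => by simpa using hM l⟩
  have hB : ∀ l, (1 + |l|) ^ 2 * ‖deriv b l‖ ≤ B := by
    obtain ⟨M, hM⟩ := hM 1
    exact le_ciSup ⟨M, forall_mem_range.2 fun l => by simpa using hM l⟩
  have hA0 : 0 ≤ A := (by positivity : (0 : ℝ) ≤ (1 + |0|) * ‖b 0‖).trans (hA 0)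
  have hB0 : 0 ≤ B := (by positivity : (0 : ℝ) ≤ (1 + |0|) ^ 2 * ‖deriv b 0‖).trans (hB 0)
  have hb1 : ContDiff ℝ 1 b := hb.of_le (by exact_mod_cast le_top)
  refine ⟨fun x hx => (exists_tendsto_integral_mul_exp hb1 hA hB hx).imp fun _ h => h.1,
    8, by norm_num, fun x hx0 hx k hk => ?_⟩
  obtain ⟨k', hk', hk'_le⟩ := exists_tendsto_integral_mul_exp hb1 hA hB (abs_pos.1 hx0)
  have hlog := log_one_add_inv_le hx0 hx.le
  have hone := one_le_two_mul_log_one_div hx0 hx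
  have hfrac : (A + B) / ((1 + |x|⁻¹) * |x|) ≤ A + B :=
    div_le_self (by positivity) (by rw [add_mul, inv_mul_cancel₀ hx0.ne']; linarith)
  rw [tendsto_nhds_unique hk hk']
  calc ‖k'‖ ≤ 2 * (A * Real.log (1 + |x|⁻¹) + (A + B) / ((1 + |x|⁻¹) * |x|)) :=
        hk'_le _ (by positivity)
    _ ≤ 2 * (A * (2 * Real.log (1 / |x|)) + (A + B) * (2 * Real.log (1 / |x|))) := by
        gcongr
        exact hfrac.trans (le_mul_of_one_le_right (by positivity) hone)
    _ ≤ 8 * Real.log (1 / |x|) * (A + B) := by nlinarith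
end

section
/- For every ζ ∈ ℝ with ζ ≠ 0, every a > 0 and every μ ∈ ℝ with μ ≠ 0, one has | ∫_a^{a + 1/|μ|} λ^{−1−iζ} e^{iμλ} dλ | ≤ 3/|ζ|. -/
/-!
Put `F(λ) = λ^{-iζ} e^{iμλ}`, which has modulus one for `λ > 0`. Since
`F' = -iζ λ^{-1-iζ} e^{iμλ} + iμ F`, the fundamental theorem of calculus gives
`-iζ ∫ₐᵇ λ^{-1-iζ} e^{iμλ} = F(b) - F(a) - iμ ∫ₐᵇ F`, whose modulus is at most
`2 + |μ| (b - a)`; on an interval of length `1/|μ|` this is `3`.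
-/

open Complex intervalIntegral

lemma hasDerivAt_ofReal_cpow_mul_cexp {l : ℝ} (hl : 0 < l) (c w : ℂ) :
    HasDerivAt (fun y : ℝ => (y : ℂ) ^ c * exp (w * y))
      (c * (l : ℂ) ^ (c - 1) * exp (w * l) + w * ((l : ℂ) ^ c * exp (w * l))) l := by
  have hpow : HasDerivAt (fun y : ℝ => (y : ℂ) ^ c) (c * (l : ℂ) ^ (c - 1)) l :=
    (hasStrictDerivAt_cpow_const (ofReal_mem_slitPlane.2 hl)).hasDerivAt.comp_ofReal
  have hexp : HasDerivAt (fun y : ℝ => exp (w * y)) (exp (w * l) * w) l := by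
    simpa using ((ofRealCLM.hasDerivAt (x := l)).const_mul w).cexp
  exact (hpow.mul hexp).congr_deriv (by ring)

lemma continuousOn_ofReal_cpow_mul_cexp {s : Set ℝ} (hs : ∀ l ∈ s, 0 < l) (c w : ℂ) :
    ContinuousOn (fun y : ℝ => (y : ℂ) ^ c * exp (w * y)) s := fun l hl =>
  (((continuousAt_cpow_const (ofReal_mem_slitPlane.2 (hs l hl))).comp
    continuous_ofReal.continuousAt).mul (by fun_prop)).continuousWithinAt

lemma const_mul_integral_cpow_sub_one_mul_cexp {a b : ℝ} (ha : 0 < a) (hb : 0 < b) (c w : ℂ) :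
    c * ∫ l in a..b, (l : ℂ) ^ (c - 1) * exp (w * l) =
      ((b : ℂ) ^ c * exp (w * b) - (a : ℂ) ^ c * exp (w * a)) -
        w * ∫ l in a..b, (l : ℂ) ^ c * exp (w * l) := by
  have hpos : ∀ l ∈ Set.uIcc a b, 0 < l := fun l hl =>
    lt_of_lt_of_le (lt_min ha hb) hl.1
  have hint : ∀ e : ℂ,
      IntervalIntegrable (fun l : ℝ => (l : ℂ) ^ e * exp (w * l)) MeasureTheory.volume a b :=
    fun e => (continuousOn_ofReal_cpow_mul_cexp hpos e w).intervalIntegrable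
  have hFTC := integral_eq_sub_of_hasDerivAt
    (fun l hl => hasDerivAt_ofReal_cpow_mul_cexp (hpos l hl) c w)
    (by simpa only [mul_assoc] using ((hint (c - 1)).const_mul c).add ((hint c).const_mul w))
  rw [← hFTC, integral_add (by simpa only [mul_assoc] using (hint (c - 1)).const_mul c)
    ((hint c).const_mul w)]
  simp only [mul_assoc, integral_const_mul]
  ring

lemma norm_ofReal_cpow_I_mul_mul_cexp_I_mul {l : ℝ} (hl : 0 < l) (ζ μ : ℝ) :
    ‖(l : ℂ) ^ (-I * ζ) * exp (I * μ * l)‖ = 1 := by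
  rw [norm_mul, norm_cpow_eq_rpow_re_of_pos hl, norm_exp]
  simp

lemma abs_mul_norm_integral_cpow_mul_cexp_le {a b : ℝ} (ha : 0 < a) (hb : 0 < b) (ζ μ : ℝ) :
    |ζ| * ‖∫ l in a..b, (l : ℂ) ^ (-1 - I * ζ) * exp (I * μ * l)‖ ≤ 2 + |μ| * |b - a| := by
  have hpos : ∀ l ∈ Set.uIoc a b, 0 < l := fun l hl =>
    lt_of_lt_of_le (lt_min ha hb) (Set.uIoc_subset_uIcc hl).1
  have hibp := const_mul_integral_cpow_sub_one_mul_cexp ha hb (-I * ζ) (I * μ)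
  rw [show -I * ζ - 1 = -1 - I * ζ by ring] at hibp
  have hF : ‖∫ l in a..b, (l : ℂ) ^ (-I * ζ) * exp (I * μ * l)‖ ≤ |b - a| := by
    simpa using norm_integral_le_of_norm_le_const fun l hl =>
      (norm_ofReal_cpow_I_mul_mul_cexp_I_mul (hpos l hl) ζ μ).le
  calc |ζ| * ‖∫ l in a..b, (l : ℂ) ^ (-1 - I * ζ) * exp (I * μ * l)‖
      = ‖-I * ζ * ∫ l in a..b, (l : ℂ) ^ (-1 - I * ζ) * exp (I * μ * l)‖ := by simp
    _ ≤ (1 + 1) + |μ| * |b - a| := by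
      rw [hibp]
      refine (norm_sub_le _ _).trans (add_le_add ((norm_sub_le _ _).trans_eq ?_) ?_)
      · rw [norm_ofReal_cpow_I_mul_mul_cexp_I_mul hb, norm_ofReal_cpow_I_mul_mul_cexp_I_mul ha]
      · simpa using mul_le_mul_of_nonneg_left hF (abs_nonneg μ)
    _ = 2 + |μ| * |b - a| := by norm_num

theorem stmt14_general (ζ : ℝ) (hζ : ζ ≠ 0) (a : ℝ) (ha : 0 < a) (μ : ℝ) :
    ‖(∫ l in a..(a + 1 / |μ|),
        (l : ℂ) ^ (-1 - Complex.I * ζ) * Complex.exp (Complex.I * μ * l))‖ ≤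
      3 / |ζ| := by
  have hb : 0 < a + 1 / |μ| := by positivity
  have hlength : |μ| * |a + 1 / |μ| - a| ≤ 1 := by
    rw [add_sub_cancel_left, abs_of_nonneg (a := 1 / |μ|) (by positivity), mul_one_div]
    exact div_self_le_one _
  rw [le_div_iff₀' (abs_pos.mpr hζ)]
  linarith [abs_mul_norm_integral_cpow_mul_cexp_le ha hb ζ μ]

/-- For `ζ ≠ 0`, `a > 0` and `μ ≠ 0`,
`|∫_a^{a+1/|μ|} λ^{-1-iζ} e^{iμλ} dλ| ≤ 3/|ζ|`. -/
theorem stmt14 (ζ : ℝ) (hζ : ζ ≠ 0) (a : ℝ) (ha : 0 < a) (μ : ℝ) (hμ : μ ≠ 0) :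
    ‖(∫ l in a..(a + 1 / |μ|),
        (l : ℂ) ^ (-1 - Complex.I * ζ) * Complex.exp (Complex.I * μ * l))‖ ≤
      3 / |ζ| :=
  stmt14_general ζ hζ a ha μ
end

section
/- There exists a constant C ≥ 0 (C = 3 works) such that for every ζ ∈ ℝ, every μ ∈ ℝ with μ ≠ 0, every b ≥ 1/|μ| and every T ≥ b, one has | ∫_b^T λ^{−1−iζ} e^{iμλ} dλ | ≤ C · (1 + |ζ|) / (|μ| · b). -/
/-!
Integrate by parts against `exp (I μ λ) = d/dλ (exp (I μ λ) / (I μ))`: the oscillation gains a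
factor `1/|μ|`. The boundary terms contribute `(b⁻¹ + T⁻¹) / |μ|`, and the new integrand
`s λ^(s-1)` with `s = -1 - I ζ` has norm `‖s‖ λ⁻²`, whose integral over `[b, T]` is at most
`‖s‖ / b ≤ (1 + |ζ|) / b`.
-/

open Complex intervalIntegral MeasureTheory Set

lemma norm_cexp_I_mul_ofReal_mul (ω x : ℝ) : ‖exp (I * ω * x)‖ = 1 := by
  simpa [mul_assoc] using norm_exp_I_mul_ofReal (ω * x)

lemma hasDerivAt_cexp_I_mul_ofReal_div {ω : ℝ} (hω : ω ≠ 0) (x : ℝ) :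
    HasDerivAt (fun t : ℝ => exp (I * ω * t) / (I * ω)) (exp (I * ω * x)) x := by
  have hIω : I * ω ≠ 0 := mul_ne_zero I_ne_zero (ofReal_ne_zero.mpr hω)
  have h := (((hasDerivAt_id (x : ℂ)).const_mul (I * ω)).cexp.comp_ofReal).div_const (I * ω)
  simpa [mul_div_assoc, div_self hIω] using h

theorem norm_integral_mul_cexp_I_mul_le {f f' : ℝ → ℂ} {a b ω : ℝ} (hab : a ≤ b) (hω : ω ≠ 0)
    (hf : ∀ x ∈ uIcc a b, HasDerivAt f (f' x) x) (hf' : IntervalIntegrable f' volume a b) :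
    ‖∫ x in a..b, f x * exp (I * ω * x)‖ ≤ (‖f a‖ + ‖f b‖ + ∫ x in a..b, ‖f' x‖) / |ω| := by
  set v : ℝ → ℂ := fun t => exp (I * ω * t) / (I * ω)
  have hv : ∀ x, ‖v x‖ = 1 / |ω| := fun x => by simp [v, norm_cexp_I_mul_ofReal_mul]
  have hexp : IntervalIntegrable (fun x : ℝ => exp (I * ω * x)) volume a b :=
    (by fun_prop : Continuous fun x : ℝ => exp (I * ω * x)).intervalIntegrable a b
  rw [integral_mul_deriv_eq_deriv_mul hf (fun x _ => hasDerivAt_cexp_I_mul_ofReal_div hω x) hf'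
    hexp]
  have hrem : ‖∫ x in a..b, f' x * v x‖ ≤ (∫ x in a..b, ‖f' x‖) / |ω| := by
    calc ‖∫ x in a..b, f' x * v x‖ ≤ ∫ x in a..b, ‖f' x * v x‖ :=
          norm_integral_le_integral_norm hab
      _ = (∫ x in a..b, ‖f' x‖) / |ω| := by simp [hv, div_eq_mul_inv]
  calc ‖f b * v b - f a * v a - ∫ x in a..b, f' x * v x‖
      ≤ ‖f b * v b‖ + ‖f a * v a‖ + ‖∫ x in a..b, f' x * v x‖ :=
        (norm_sub_le _ _).trans (add_le_add_left (norm_sub_le _ _) _)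
    _ ≤ ‖f b‖ / |ω| + ‖f a‖ / |ω| + (∫ x in a..b, ‖f' x‖) / |ω| := by
      rw [norm_mul, norm_mul, hv, hv, mul_one_div, mul_one_div]; gcongr
    _ = (‖f a‖ + ‖f b‖ + ∫ x in a..b, ‖f' x‖) / |ω| := by ring

lemma pos_of_mem_uIcc {b T x : ℝ} (hb : 0 < b) (hbT : b ≤ T) (hx : x ∈ uIcc b T) : 0 < x :=
  hb.trans_le (uIcc_of_le hbT ▸ hx).1

theorem integral_norm_deriv_ofReal_cpow {s : ℂ} (hs : s.re = -1) {b T : ℝ} (hb : 0 < b)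
    (hbT : b ≤ T) :
    ∫ x in b..T, ‖s * (x : ℂ) ^ (s - 1)‖ = ‖s‖ * (b⁻¹ - T⁻¹) := by
  have h0 : (0 : ℝ) ∉ uIcc b T := fun h => (pos_of_mem_uIcc hb hbT h).false
  rw [integral_congr (g := fun x => ‖s‖ * x ^ (-2 : ℤ)) fun x hx => ?_,
    intervalIntegral.integral_const_mul, integral_zpow (Or.inr ⟨by norm_num, h0⟩)]
  · congr 1; norm_num; ring
  · simp only [norm_mul, norm_cpow_eq_rpow_re_of_pos (pos_of_mem_uIcc hb hbT hx), sub_re, hs,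
      one_re]
    norm_num

theorem norm_integral_ofReal_cpow_mul_cexp_le {s : ℂ} (hs : s.re = -1) {b T ω : ℝ} (hb : 0 < b)
    (hbT : b ≤ T) (hω : ω ≠ 0) :
    ‖∫ x in b..T, (x : ℂ) ^ s * exp (I * ω * x)‖ ≤ (2 + ‖s‖) / (|ω| * b) := by
  have hderiv : ∀ x ∈ uIcc b T,
      HasDerivAt (fun t : ℝ => (t : ℂ) ^ s) (s * (x : ℂ) ^ (s - 1)) x := fun x hx => by
    simpa using ((hasDerivAt_id (x : ℂ)).cpow_const
      (ofReal_mem_slitPlane.mpr (pos_of_mem_uIcc hb hbT hx))).comp_ofReal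
  have hcont : ContinuousOn (fun x : ℝ => s * (x : ℂ) ^ (s - 1)) (uIcc b T) :=
    continuousOn_const.mul fun x hx => (continuousAt_ofReal_cpow_const x _
      (Or.inr (pos_of_mem_uIcc hb hbT hx).ne')).continuousWithinAt
  have hnorm : ∀ x : ℝ, 0 < x → ‖(x : ℂ) ^ s‖ = x⁻¹ := fun x hx => by
    rw [norm_cpow_eq_rpow_re_of_pos hx, hs, Real.rpow_neg_one]
  refine (norm_integral_mul_cexp_I_mul_le hbT hω hderiv hcont.intervalIntegrable).trans ?_
  rw [hnorm b hb, hnorm T (hb.trans_le hbT), integral_norm_deriv_ofReal_cpow hs hb hbT,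
    mul_comm |ω|, ← div_div]
  gcongr
  have hTb : T⁻¹ ≤ b⁻¹ := inv_anti₀ hb hbT
  have hT : 0 ≤ T⁻¹ := inv_nonneg.mpr (hb.le.trans hbT)
  calc b⁻¹ + T⁻¹ + ‖s‖ * (b⁻¹ - T⁻¹) ≤ b⁻¹ + b⁻¹ + ‖s‖ * b⁻¹ := by
        gcongr; linarith
    _ = (2 + ‖s‖) / b := by ring

/-- There is `C ≥ 0` (e.g. `C = 3`) such that for all `ζ ∈ ℝ`, `μ ≠ 0`,
`b ≥ 1/|μ|` and `T ≥ b`, `|∫_b^T λ^{-1-iζ} e^{iμλ} dλ| ≤ C (1+|ζ|)/(|μ| b)`. -/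
theorem stmt15 :
    ∃ C : ℝ, 0 ≤ C ∧ ∀ (ζ μ : ℝ), μ ≠ 0 → ∀ b : ℝ, 1 / |μ| ≤ b → ∀ T : ℝ, b ≤ T →
      ‖∫ l in b..T,
          (l : ℂ) ^ (-1 - Complex.I * ζ) * Complex.exp (Complex.I * μ * l)‖ ≤
        C * (1 + |ζ|) / (|μ| * b) := by
  refine ⟨3, by norm_num, fun ζ μ hμ b hb T hbT => ?_⟩
  have hb0 : 0 < b := (one_div_pos.mpr (abs_pos.mpr hμ)).trans_le hb
  have hs : ‖-1 - I * ζ‖ ≤ 1 + |ζ| := (norm_sub_le _ _).trans (by simp)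
  calc _ ≤ (2 + ‖-1 - I * ζ‖) / (|μ| * b) :=
        norm_integral_ofReal_cpow_mul_cexp_le (by simp) hb0 hbT hμ
    _ ≤ 3 * (1 + |ζ|) / (|μ| * b) := by
        gcongr; linarith [abs_nonneg ζ]
end

section
/- For every j ∈ ℕ there exists a constant C_j ≥ 0 such that for every λ > 0 and every r > 0, |(L^j f_λ)(r)| ≤ C_j · λ^{2j}, where f_λ(s) = cos(λ s) and L is the operator (L g)(s) = g′(s)/s acting on smooth functions on (0,∞), with L^j its j-fold iteration. -/
/-!
For `u ≠ 0`, `L^{j+1} cos u` is `(-1)^{j+1} / (2^j j!)` times Poisson's integral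
`∫₀¹ (1 - t²)^j cos(ut) dt` (a multiple of `u^{-(j+1/2)} J_{j+1/2}(u)`): for `j = 0` this is
`-sin u / u`, and differentiating under the integral and integrating by parts shows that `L` sends
the `j`-th integral to a multiple of the `(j+1)`-st. Hence `|L^j cos| ≤ 1` away from `0`.
Since `L` is homogeneous of degree `-2` under dilations, `L^j (cos (λ ·)) = λ^{2j} (L^j cos)(λ ·)`,
so `C_j = 1` works.
-/

open Real intervalIntegral
open scoped Nat

/-- The operator `(L g)(s) = g'(s) / s`. -/
noncomputable def Lop (g : ℝ → ℝ) : ℝ → ℝ := fun s => deriv g s / s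

noncomputable def poissonIntegral (j : ℕ) (u : ℝ) : ℝ :=
  ∫ t in (0 : ℝ)..1, (1 - t ^ 2) ^ j * cos (u * t)

lemma abs_one_sub_sq_pow_le_one (j : ℕ) {t : ℝ} (ht : |t| ≤ 1) : |(1 - t ^ 2) ^ j| ≤ 1 := by
  rw [abs_pow]
  refine pow_le_one₀ (abs_nonneg _) (abs_le.2 ⟨?_, ?_⟩) <;> nlinarith [abs_nonneg t, sq_abs t]

lemma abs_poissonIntegral_le_one (j : ℕ) (u : ℝ) : |poissonIntegral j u| ≤ 1 := by
  have h := norm_integral_le_of_norm_le_const (a := 0) (b := 1) (C := 1)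
    (f := fun t => (1 - t ^ 2) ^ j * cos (u * t)) fun t ht => by
      rw [Set.uIoc_of_le zero_le_one] at ht
      rw [norm_mul, norm_eq_abs, norm_eq_abs]
      exact mul_le_one₀ (abs_one_sub_sq_pow_le_one j (abs_le.2 ⟨by linarith [ht.1], ht.2⟩))
        (abs_nonneg _) (abs_cos_le_one _)
  simpa [poissonIntegral] using h

lemma poissonIntegral_zero {u : ℝ} (hu : u ≠ 0) : poissonIntegral 0 u = sin u / u := by
  have hderiv (t : ℝ) : HasDerivAt (fun t => sin (u * t) / u) ((1 - t ^ 2) ^ 0 * cos (u * t)) t := by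
    refine ((((hasDerivAt_id t).const_mul u).sin).div_const u).congr_deriv ?_
    field_simp
    simp
  rw [poissonIntegral, integral_eq_sub_of_hasDerivAt (fun t _ => hderiv t)
    (Continuous.intervalIntegrable (by fun_prop) _ _)]
  simp

lemma integral_neg_sin_mul_eq_poissonIntegral_succ (j : ℕ) (u : ℝ) :
    ∫ t in (0 : ℝ)..1, (1 - t ^ 2) ^ j * (-sin (u * t) * t)
      = -(u / (2 * (j + 1))) * poissonIntegral (j + 1) u := by
  set f := fun t : ℝ => (1 - t ^ 2) ^ j * (-sin (u * t) * t)
  set g := fun t : ℝ => (1 - t ^ 2) ^ (j + 1) * cos (u * t)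
  have hderiv (t : ℝ) : HasDerivAt (fun t => (1 - t ^ 2) ^ (j + 1) * sin (u * t))
      (2 * (j + 1) * f t + u * g t) t := by
    refine ((((hasDerivAt_pow 2 t).const_sub 1).pow (j + 1)).mul
      (((hasDerivAt_id t).const_mul u).sin)).congr_deriv ?_
    simp only [f, g, Nat.add_sub_cancel, Pi.pow_apply, id]
    push_cast
    ring
  have hf : IntervalIntegrable f MeasureTheory.volume 0 1 :=
    Continuous.intervalIntegrable (by fun_prop) _ _
  have hg : IntervalIntegrable g MeasureTheory.volume 0 1 :=
    Continuous.intervalIntegrable (by fun_prop) _ _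
  -- the boundary terms vanish: `1 - t²` at `t = 1` and `sin (u t)` at `t = 0`
  have hparts : ∫ t in (0 : ℝ)..1, (2 * (j + 1) * f t + u * g t) = 0 := by
    rw [integral_eq_sub_of_hasDerivAt (fun t _ => hderiv t)
      ((hf.const_mul _).add (hg.const_mul _))]
    simp
  rw [integral_add (hf.const_mul _) (hg.const_mul _), integral_const_mul,
    integral_const_mul] at hparts
  have hj : (2 * ((j : ℝ) + 1)) ≠ 0 := by positivity
  rw [poissonIntegral]
  field_simp
  linarith

lemma hasDerivAt_poissonIntegral (j : ℕ) (u : ℝ) :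
    HasDerivAt (poissonIntegral j) (-(u / (2 * (j + 1))) * poissonIntegral (j + 1) u) u := by
  rw [← integral_neg_sin_mul_eq_poissonIntegral_succ]
  refine (hasDerivAt_integral_of_dominated_loc_of_deriv_le
    (F := fun x t => (1 - t ^ 2) ^ j * cos (x * t))
    (F' := fun x t => (1 - t ^ 2) ^ j * (-sin (x * t) * t)) (bound := fun _ => 1)
    (Metric.ball_mem_nhds u zero_lt_one)
    (.of_forall fun x => (Continuous.aestronglyMeasurable (by fun_prop)))
    (Continuous.intervalIntegrable (by fun_prop) _ _)
    (Continuous.aestronglyMeasurable (by fun_prop)) (.of_forall fun t ht x _ => ?_)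
    intervalIntegrable_const (.of_forall fun t _ x _ => ?_)).2
  · rw [Set.uIoc_of_le zero_le_one] at ht
    have ht1 : |t| ≤ 1 := abs_le.2 ⟨by linarith [ht.1], ht.2⟩
    rw [norm_mul, norm_mul, norm_neg, norm_eq_abs, norm_eq_abs, norm_eq_abs]
    exact mul_le_one₀ (abs_one_sub_sq_pow_le_one j ht1) (by positivity)
      (mul_le_one₀ (abs_sin_le_one _) (abs_nonneg _) ht1)
  · exact ((hasDerivAt_mul_const t).cos).const_mul _

lemma iterate_Lop_cos (j : ℕ) {u : ℝ} (hu : u ≠ 0) :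
    Lop^[j + 1] cos u = (-1) ^ (j + 1) / (2 ^ j * j !) * poissonIntegral j u := by
  induction j generalizing u with
  | zero =>
    rw [Function.iterate_one, Lop, deriv_cos', poissonIntegral_zero hu]
    simp only [pow_zero, Nat.factorial_zero, Nat.cast_one, mul_one]
    ring
  | succ j ih =>
    have hev : Lop^[j + 1] cos =ᶠ[nhds u]
        fun v => (-1) ^ (j + 1) / (2 ^ j * j !) * poissonIntegral j v :=
      (eventually_ne_nhds hu).mono fun v hv => ih hv
    rw [Function.iterate_succ_apply', Lop, hev.deriv_eq, deriv_const_mul_field,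
      (hasDerivAt_poissonIntegral j u).deriv, Nat.factorial_succ]
    push_cast
    field_simp
    ring

lemma iterate_Lop_comp_mul (g : ℝ → ℝ) (c : ℝ) (j : ℕ) :
    Lop^[j] (fun s => g (c * s)) = fun s => c ^ (2 * j) * Lop^[j] g (c * s) := by
  induction j with
  | zero => simp
  | succ j ih =>
    funext s
    rw [Function.iterate_succ_apply', ih, Function.iterate_succ_apply', Lop, Lop,
      deriv_const_mul_field, deriv_comp_mul_left, smul_eq_mul]
    rcases eq_or_ne s 0 with rfl | hs
    · simp
    rcases eq_or_ne c 0 with rfl | hc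
    · simp
    field_simp
    ring

lemma abs_iterate_Lop_cos_le_one (j : ℕ) {u : ℝ} (hu : u ≠ 0) : |Lop^[j] cos u| ≤ 1 := by
  cases j with
  | zero => exact abs_cos_le_one u
  | succ k =>
    rw [iterate_Lop_cos k hu, abs_mul]
    have hconst : |(-1 : ℝ) ^ (k + 1) / (2 ^ k * k !)| ≤ 1 := by
      rw [abs_div, abs_pow, abs_neg, abs_one, one_pow, abs_of_pos (by positivity)]
      exact div_le_one_of_le₀ (one_le_mul_of_one_le_of_one_le (one_le_pow₀ one_le_two)
        (by exact_mod_cast k.factorial_pos)) (by positivity)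
    exact mul_le_one₀ hconst (abs_nonneg _) (abs_poissonIntegral_le_one k u)

/-- For every `j ∈ ℕ` there is `C_j ≥ 0` such that for all `λ > 0` and `r > 0`,
`|(L^j cos(λ·))(r)| ≤ C_j λ^{2j}`. -/
theorem stmt17 (j : ℕ) :
    ∃ C : ℝ, 0 ≤ C ∧ ∀ lam : ℝ, 0 < lam → ∀ r : ℝ, 0 < r →
      |Lop^[j] (fun s : ℝ => Real.cos (lam * s)) r| ≤ C * lam ^ (2 * j) := by
  refine ⟨1, zero_le_one, fun lam hlam r hr => ?_⟩
  rw [iterate_Lop_comp_mul cos lam j, abs_mul, abs_of_pos (by positivity), one_mul]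
  exact mul_le_of_le_one_right (by positivity) (abs_iterate_Lop_cos_le_one j (by positivity))
end

section
/- Let n ≥ 4 be an integer, let γ be a real number with 1 < γ ≤ 1 + 3/n, and let σ > 0. Then there exist real numbers p, q, p̃, q̃ ∈ (1, ∞) satisfying the compatibility conditions (i)–(vii) below together with σ ≥ ((n+1)/2)·(1/2 − 1/q). -/
/-!
Take `p̃ = 2` and `p = 2γ`, so that (i) holds, and write `1/q = 1/2 - ε`, `1/q̃ = 1/2 - δ`.
All conditions except (iii) ask for small slacks: `δ + γε ≤ (γ - 1)/2`, `(n - 1)δ ≤ 1`,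
`(n - 1)ε ≤ 1/γ` and `(n + 1)ε ≤ 2σ`. Condition (iii) asks for a large one:
`n(γ - 1)/2 - 1 ≤ (n - 1)δ/2 + (nγ - (n + 1)/2)ε`. With `c = min ((γ - 1)/2) (1/(n - 1))` and
`δ = c - γε` the right side is `(n - 1)c/2 + (n + 1)(γ - 1)ε/2`, and `γ ≤ 1 + 3/n` is what makes
`(n - 1)c/2 ≥ n(γ - 1)/2 - 1`; it then only remains to take `ε > 0` small enough.
-/

open Filter Topology

lemma eventually_mul_lt (k : ℝ) {c : ℝ} (hc : 0 < c) : ∀ᶠ ε in 𝓝 (0 : ℝ), k * ε < c :=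
  ((continuous_const_mul k).tendsto' 0 0 (mul_zero k)).eventually_lt_const hc

section

variable {m γ : ℝ}

lemma mul_sub_one_half_sub_one_le_mul_min (hm : 4 ≤ m) (hγ1 : 1 < γ) (hγ2 : γ ≤ 1 + 3 / m) :
    m * (γ - 1) / 2 - 1 ≤ (m - 1) / 2 * min ((γ - 1) / 2) (1 / (m - 1)) := by
  have hγm : m * (γ - 1) ≤ 3 := by
    rw [← le_div_iff₀' (by linarith)]; linarith
  rw [mul_min_of_nonneg _ _ (by linarith), le_min_iff]
  constructor
  · nlinarith
  · rw [mul_one_div, div_div, div_mul_cancel_right₀ (by linarith : m - 1 ≠ 0)]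
    linarith

lemma exists_exponent_slacks (hm : 4 ≤ m) (hγ1 : 1 < γ) (hγ2 : γ ≤ 1 + 3 / m) {σ : ℝ}
    (hσ : 0 < σ) :
    ∃ ε δ : ℝ, 0 < ε ∧ 0 < δ ∧ δ + γ * ε ≤ (γ - 1) / 2 ∧ (m - 1) * δ ≤ 1 ∧
      (m - 1) * ε ≤ γ⁻¹ ∧ (m + 1) * ε ≤ 2 * σ ∧
      m * (γ - 1) / 2 - 1 ≤ (m - 1) / 2 * δ + (m * γ - (m + 1) / 2) * ε := by
  set c := min ((γ - 1) / 2) (1 / (m - 1))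
  have hc : 0 < c := lt_min (by linarith) (one_div_pos.2 (by linarith))
  obtain ⟨ε, hε, hεc, hεγ, hεσ⟩ := ((eventually_mul_lt γ hc).and <|
    (eventually_mul_lt (m - 1) (inv_pos.2 (by linarith : 0 < γ))).and <|
      eventually_mul_lt (m + 1) (mul_pos two_pos hσ)).exists_gt
  refine ⟨ε, c - γ * ε, hε, by linarith, ?_, ?_, hεγ.le, hεσ.le, ?_⟩
  · linarith [min_le_left ((γ - 1) / 2) (1 / (m - 1))]
  · have := min_le_right ((γ - 1) / 2) (1 / (m - 1))
    rw [le_div_iff₀ (by linarith)] at this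
    nlinarith
  · have := mul_sub_one_half_sub_one_le_mul_min hm hγ1 hγ2
    nlinarith [mul_nonneg (mul_nonneg (by linarith : 0 ≤ m + 1) (by linarith : 0 ≤ γ - 1)) hε.le]

lemma sub_three_div_le_half_sub (hm : 1 < m) {x : ℝ} (hx : (m - 1) * x ≤ 1) :
    (m - 3) / (2 * (m - 1)) ≤ 1 / 2 - x := by
  rw [div_le_iff₀ (by linarith)]
  linarith

end

/-- Case (A) of the admissibility analysis: for `n ≥ 4`, `1 < γ ≤ 1 + 3/n` and
`σ > 0`, there exist exponents `p, q, p̃, q̃ ∈ (1,∞)` satisfying the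
compatibility conditions (i)–(vii) together with `σ ≥ ((n+1)/2)(1/2 - 1/q)`. -/
theorem stmt18 (n : ℕ) (hn : 4 ≤ n) (γ σ : ℝ)
    (hγ1 : 1 < γ) (hγ2 : γ ≤ 1 + 3 / (n : ℝ)) (hσ : 0 < σ) :
    ∃ p q pt qt : ℝ, 1 < p ∧ 1 < q ∧ 1 < pt ∧ 1 < qt ∧
      -- (i)
      p = pt / (pt - 1) * γ ∧
      -- (ii)  (note 1/q̃′ = 1 - 1/q̃)
      (0 < 1 - 1 / qt ∧ 1 - 1 / qt ≤ γ / q ∧ γ / q < 1) ∧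
      -- (iii)
      ((n : ℝ) - 1) / 2 - ((n : ℝ) + 1) / 2 * (1 / q + 1 / qt) ≤
        (n : ℝ) * ((1 - 1 / qt) - γ / q) ∧
      -- (iv)
      ((n : ℝ) - 1) / 2 ≤ 2 / p + ((n : ℝ) - 1) / q ∧
      -- (v)
      ((n : ℝ) - 1) / 2 ≤ 2 / pt + ((n : ℝ) - 1) / qt ∧
      -- (vi)
      (0 < 1 / p ∧ 1 / p ≤ 1 / 2 ∧
        ((n : ℝ) - 3) / (2 * ((n : ℝ) - 1)) ≤ 1 / q ∧ 1 / q < 1 / 2) ∧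
      -- (vii)
      (0 < 1 / pt ∧ 1 / pt ≤ 1 / 2 ∧
        ((n : ℝ) - 3) / (2 * ((n : ℝ) - 1)) ≤ 1 / qt ∧ 1 / qt < 1 / 2) ∧
      ((n : ℝ) + 1) / 2 * (1 / 2 - 1 / q) ≤ σ := by
  have hm : (4 : ℝ) ≤ n := by exact_mod_cast hn
  obtain ⟨ε, δ, hε, hδ, hδε, hδm, hεm, hεσ, hiii⟩ := exists_exponent_slacks hm hγ1 hγ2 hσ
  have hγ : γ < 2 := by
    have : 3 / (n : ℝ) ≤ 3 / 4 := div_le_div_of_nonneg_left (by norm_num) (by norm_num) hm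
    linarith
  have hεm' : (n - 1) * ε ≤ 1 := hεm.trans (inv_le_one_of_one_le₀ hγ1.le)
  have hε2 : ε < 1 / 2 := by nlinarith
  have hδ2 : δ < 1 / 2 := by nlinarith
  refine ⟨2 * γ, (1 / 2 - ε)⁻¹, 2, (1 / 2 - δ)⁻¹, by linarith,
    one_lt_inv_iff₀.2 ⟨by linarith, by linarith⟩, one_lt_two,
    one_lt_inv_iff₀.2 ⟨by linarith, by linarith⟩, by norm_num, ?_⟩
  simp only [div_inv_eq_mul, one_mul, div_mul_cancel_left₀ two_ne_zero γ]
  exact ⟨⟨by linarith, by linarith, by nlinarith⟩, by linarith, by linarith, by linarith,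
    ⟨by positivity, one_div_le_one_div_of_le two_pos (by linarith),
      sub_three_div_le_half_sub (by linarith) hεm', by linarith⟩,
    ⟨by norm_num, le_rfl, sub_three_div_le_half_sub (by linarith) hδm, by linarith⟩, by linarith⟩
end

section
/- Let n ≥ 4 be an integer, set γ₂ = (n+1)²/(n² − 2n + 5) and γ_conf = (n+3)/(n−1), let γ be a real number with γ₂ ≤ γ ≤ γ_conf, and let σ be a real number with σ ≥ (n+1)/4 − 1/(γ−1). Then there exist real numbers p, q, p̃, q̃ ∈ (1, ∞) satisfying the compatibility conditions (i)–(vii) below together with σ ≥ ((n+1)/2)·(1/2 − 1/q). -/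
/-!
In the reciprocals `u = 1/p`, `a = 1/q`, `v = 1/p̃`, `b = 1/q̃` all conditions are linear.
Take `a = 2/((n+1)(γ-1))`, which makes the σ-condition sharp, and then `b = 1 - γa`,
`2v = (n-1)(1/2 - b)`, `u = (1-v)/γ`, which make (ii), (v), (i) and then also (iii) equalities.
With these choices (iv) is exactly `γ ≤ γ_conf`, the bounds `(n-3)/(2(n-1)) ≤ b` and `v ≤ 1/2`
are exactly `γ₂ ≤ γ`, and `u ≤ 1/2` is the positivity of `2(n+1)x² - (n²-2n+5)x + 4(n-1)` at
`x = γ - 1`. Multiplied by `(n-1)²` this quadratic is `(n-1)³(4-y) + 2y((n+1)y - 2(n-1))` with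
`y = (n-1)x ∈ (2, 4]`.
-/

/-- The conditions (i)–(vii) for `p = 1/u`, `q = 1/a`, `p̃ = 1/v`, `q̃ = 1/b`. -/
structure ReciprocalCompatible (N γ u a v b : ℝ) : Prop where
  cond_i : u * γ = 1 - v
  cond_ii : 0 < 1 - b ∧ 1 - b ≤ γ * a ∧ γ * a < 1
  cond_iii : (N - 1) / 2 - (N + 1) / 2 * (a + b) ≤ N * (1 - b - γ * a)
  cond_iv : (N - 1) / 2 ≤ 2 * u + (N - 1) * a
  cond_v : (N - 1) / 2 ≤ 2 * v + (N - 1) * b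
  cond_vi : 0 < u ∧ u ≤ 1 / 2 ∧ (N - 3) / (2 * (N - 1)) ≤ a ∧ a < 1 / 2
  cond_vii : 0 < v ∧ v ≤ 1 / 2 ∧ (N - 3) / (2 * (N - 1)) ≤ b ∧ b < 1 / 2

theorem one_div_eq_div_sub_one_mul {u v γ : ℝ} (hu : u ≠ 0) (hv : v ≠ 0) (hv1 : v ≠ 1)
    (h : u * γ = 1 - v) : 1 / u = 1 / v / (1 / v - 1) * γ := by
  have : 1 - v ≠ 0 := sub_ne_zero.mpr (Ne.symm hv1)
  field_simp
  linear_combination -h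

theorem quadratic_pos_of_mem_Ioc {N x : ℝ} (hN : 1 < N) (hx : (N - 1) * x ∈ Set.Ioc 2 4) :
    0 < 2 * (N + 1) * x ^ 2 - (N ^ 2 - 2 * N + 5) * x + 4 * (N - 1) := by
  set y := (N - 1) * x
  obtain ⟨hlow, hup⟩ := hx
  have hy : 0 < y * ((N + 1) * y - 2 * (N - 1)) := mul_pos (by linarith) (by nlinarith)
  have hcube : 0 ≤ (N - 1) ^ 3 * (4 - y) := mul_nonneg (pow_nonneg (by linarith) 3) (by linarith)
  have hid : (N - 1) ^ 2 * (2 * (N + 1) * x ^ 2 - (N ^ 2 - 2 * N + 5) * x + 4 * (N - 1)) =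
      (N - 1) ^ 3 * (4 - y) + 2 * (y * ((N + 1) * y - 2 * (N - 1))) := by ring
  refine pos_of_mul_pos_right (a := (N - 1) ^ 2) ?_ (by positivity)
  rw [hid]
  positivity

theorem sub_one_bounds_of_le_of_le {N γ : ℝ} (hN : 1 < N)
    (hγ₂ : (N + 1) ^ 2 / (N ^ 2 - 2 * N + 5) ≤ γ) (hγconf : γ ≤ (N + 3) / (N - 1)) :
    4 * (N - 1) ≤ (N ^ 2 - 2 * N + 5) * (γ - 1) ∧ (N - 1) * (γ - 1) ≤ 4 := by
  rw [div_le_iff₀ (by nlinarith)] at hγ₂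
  rw [le_div_iff₀ (by linarith)] at hγconf
  constructor <;> linarith

theorem reciprocalCompatible_of_eq {N γ u a v b : ℝ} (hN : 3 < N)
    (hlow : 4 * (N - 1) ≤ (N ^ 2 - 2 * N + 5) * (γ - 1)) (hup : (N - 1) * (γ - 1) ≤ 4)
    (ha : a * ((N + 1) * (γ - 1)) = 2) (hb : b = 1 - γ * a)
    (hv : 2 * v = (N - 1) * (1 / 2 - b)) (hu : u * γ = 1 - v) :
    ReciprocalCompatible N γ u a v b := by
  have hx : 0 < γ - 1 := by nlinarith
  have hy : 2 < (N - 1) * (γ - 1) := by nlinarith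
  have hγa_lt : γ * a < 1 := by nlinarith
  have hγa_gt : 1 / 2 < γ * a := by nlinarith
  have hγa_le : 2 * (N - 1) * (γ * a) ≤ N + 1 := by nlinarith
  have hquad := quadratic_pos_of_mem_Ioc (by linarith) ⟨hy, hup⟩
  have hv_ge : 2 - γ ≤ 2 * v := by nlinarith
  have hN1 : 0 < 2 * (N - 1) := by linarith
  subst hb
  exact {
    cond_i := hu
    cond_ii := ⟨by linarith, by linarith, hγa_lt⟩
    cond_iii := by nlinarith
    cond_iv := by nlinarith
    cond_v := by linarith
    cond_vi := ⟨by nlinarith, by nlinarith, by rw [div_le_iff₀ hN1]; nlinarith, by nlinarith⟩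
    cond_vii := ⟨by nlinarith, by nlinarith, by rw [div_le_iff₀ hN1]; linarith, by linarith⟩ }

/-- Case (C) of the admissibility analysis: for `n ≥ 4`,
`γ₂ = (n+1)²/(n² - 2n + 5) ≤ γ ≤ γ_conf = (n+3)/(n-1)` and
`σ ≥ (n+1)/4 - 1/(γ-1)`, there exist exponents `p, q, p̃, q̃ ∈ (1,∞)`
satisfying the compatibility conditions (i)–(vii) together with
`σ ≥ ((n+1)/2)(1/2 - 1/q)`. -/
theorem stmt19 (n : ℕ) (hn : 4 ≤ n) (γ σ : ℝ)
    (hγ1 : ((n : ℝ) + 1) ^ 2 / ((n : ℝ) ^ 2 - 2 * n + 5) ≤ γ)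
    (hγ2 : γ ≤ ((n : ℝ) + 3) / ((n : ℝ) - 1))
    (hσ : ((n : ℝ) + 1) / 4 - 1 / (γ - 1) ≤ σ) :
    ∃ p q pt qt : ℝ, 1 < p ∧ 1 < q ∧ 1 < pt ∧ 1 < qt ∧
      -- (i)
      p = pt / (pt - 1) * γ ∧
      -- (ii)  (note 1/q̃′ = 1 - 1/q̃)
      (0 < 1 - 1 / qt ∧ 1 - 1 / qt ≤ γ / q ∧ γ / q < 1) ∧
      -- (iii)
      ((n : ℝ) - 1) / 2 - ((n : ℝ) + 1) / 2 * (1 / q + 1 / qt) ≤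
        (n : ℝ) * ((1 - 1 / qt) - γ / q) ∧
      -- (iv)
      ((n : ℝ) - 1) / 2 ≤ 2 / p + ((n : ℝ) - 1) / q ∧
      -- (v)
      ((n : ℝ) - 1) / 2 ≤ 2 / pt + ((n : ℝ) - 1) / qt ∧
      -- (vi)
      (0 < 1 / p ∧ 1 / p ≤ 1 / 2 ∧
        ((n : ℝ) - 3) / (2 * ((n : ℝ) - 1)) ≤ 1 / q ∧ 1 / q < 1 / 2) ∧
      -- (vii)
      (0 < 1 / pt ∧ 1 / pt ≤ 1 / 2 ∧
        ((n : ℝ) - 3) / (2 * ((n : ℝ) - 1)) ≤ 1 / qt ∧ 1 / qt < 1 / 2) ∧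
      ((n : ℝ) + 1) / 2 * (1 / 2 - 1 / q) ≤ σ := by
  have hN : (3 : ℝ) < n := by exact_mod_cast hn
  obtain ⟨hlow, hup⟩ := sub_one_bounds_of_le_of_le (by linarith) hγ1 hγ2
  have hx : γ - 1 ≠ 0 := by nlinarith
  have hγ : γ ≠ 0 := by nlinarith
  have hσa : ((n : ℝ) + 1) / 2 * (1 / 2 - 2 / ((n + 1) * (γ - 1))) =
      (n + 1) / 4 - 1 / (γ - 1) := by
    field_simp; ring
  set a := 2 / ((n + 1) * (γ - 1))
  set b := 1 - γ * a
  set v := (n - 1) * (1 / 2 - b) / 2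
  set u := (1 - v) / γ
  have hc : ReciprocalCompatible n γ u a v b :=
    reciprocalCompatible_of_eq hN hlow hup (div_mul_cancel₀ _ (mul_ne_zero (by positivity) hx))
      rfl (by ring) (div_mul_cancel₀ _ hγ)
  obtain ⟨hu0, hu, ha0, ha⟩ := hc.cond_vi
  obtain ⟨hv0, hv, hb0, hb⟩ := hc.cond_vii
  have hlower : 0 < ((n : ℝ) - 3) / (2 * (n - 1)) := div_pos (by linarith) (by linarith)
  refine ⟨1 / u, 1 / a, 1 / v, 1 / b, one_lt_one_div hu0 (by linarith),
    one_lt_one_div (hlower.trans_le ha0) (by linarith), one_lt_one_div hv0 (by linarith),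
    one_lt_one_div (hlower.trans_le hb0) (by linarith), ?_⟩
  simp only [div_div_eq_mul_div, div_one, one_mul]
  exact ⟨one_div_eq_div_sub_one_mul hu0.ne' hv0.ne' (by linarith) hc.cond_i, hc.cond_ii,
    hc.cond_iii, hc.cond_iv, hc.cond_v, hc.cond_vi, hc.cond_vii, hσa ▸ hσ⟩
end
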